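/- arXiv:math/0505195 — 6 statements merged into one kernel-verified Lean document; each statement's English description precedes it below -/
import Mathlib

section
/- If f : ℝ² → ℝ is monotonically increasing in the two-dimensional sense (all mixed second-order increments over rectangles are nonnegative) and also left continuous (for every increasing sequence (s_k, x_k) converging to (s,x) with (s_k,x_k) ≤ (s,x) componentwise, f(s_k,x_k) → f(s,x)), then μ([s₁,s₂)×[x₁,x₂)) = f(s₂,x₂) − f(s₂,x₁) − f(s₁,x₂) + f(s₁,x₁) extends to a countably additive Borel measure on ℝ², i.e., there is a Borel measure μ on ℝ² with μ([s₁,s₂)×[x₁,x₂)) given by the above formula for all s₁<s₂, x₁<x₂. -/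
open MeasureTheory Set Filter Topology Real

/-- Mixed second-order increment of a two-variable function over a rectangle. -/
noncomputable def mixedInc (f : ℝ → ℝ → ℝ) (s₁ s₂ x₁ x₂ : ℝ) : ℝ :=
  f s₂ x₂ - f s₂ x₁ - f s₁ x₂ + f s₁ x₁

/-- Two-dimensional variation of `f` on the rectangle `[t,s] × [a,x]`:
supremum over grid partitions of sums of absolute mixed second-order increments. -/
noncomputable def var2 (f : ℝ → ℝ → ℝ) (t s a x : ℝ) : ENNReal :=
  ⨆ m : ℕ, ⨆ n : ℕ, ⨆ σ : Fin (m+1) → ℝ, ⨆ τ : Fin (n+1) → ℝ,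
    ⨆ _ : StrictMono σ ∧ StrictMono τ ∧ σ 0 = t ∧ σ (Fin.last m) = s ∧
      τ 0 = a ∧ τ (Fin.last n) = x,
    ∑ i : Fin m, ∑ j : Fin n,
      ENNReal.ofReal |mixedInc f (σ i.castSucc) (σ i.succ) (τ j.castSucc) (τ j.succ)|

/-- One-dimensional total variation of `g` on `[a,b]`. -/
noncomputable def var1 (g : ℝ → ℝ) (a b : ℝ) : ENNReal :=
  ⨆ n : ℕ, ⨆ τ : Fin (n+1) → ℝ,
    ⨆ _ : StrictMono τ ∧ τ 0 = a ∧ τ (Fin.last n) = b,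
    ∑ j : Fin n, ENNReal.ofReal |g (τ j.succ) - g (τ j.castSucc)|

/-- `f` is monotonically increasing in the two-dimensional sense. -/
def Inc2 (f : ℝ → ℝ → ℝ) : Prop :=
  ∀ s₁ s₂ x₁ x₂ : ℝ, s₁ ≤ s₂ → x₁ ≤ x₂ → 0 ≤ mixedInc f s₁ s₂ x₁ x₂

/-- Joint left continuity of a two-variable function at `(s,x)`:
continuity along monotone approach from below in both variables. -/
def LeftCont2At (f : ℝ → ℝ → ℝ) (s x : ℝ) : Prop :=
  ∀ u v : ℕ → ℝ, Monotone u → Monotone v → (∀ k, u k ≤ s) → (∀ k, v k ≤ x) →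
    Tendsto u atTop (𝓝 s) → Tendsto v atTop (𝓝 x) →
    Tendsto (fun k => f (u k) (v k)) atTop (𝓝 (f s x))

/-- `g` has left derivative `d` at `x`. -/
def HasLeftDeriv (g : ℝ → ℝ) (x d : ℝ) : Prop :=
  Tendsto (fun h => (g x - g (x - h)) / h) (𝓝[>] (0:ℝ)) (𝓝 d)

/-!
Reflecting both variables turns left continuity into right continuity and the rectangles
`[s₁, s₂) × [x₁, x₂)` into `(a, b] × (c, d]`, so it suffices to treat a right continuous `G`.
For `c ≤ d` the increment `t ↦ G t d - G t c` is a Stieltjes function, whose measure `m c d` is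
additive in the interval `[c, d]`. On a strip `n ≤ y ≤ n + 1` the measures `ρ y = m n y` increase
from `0` to `ν = m n (n + 1)`, so for `ν`-a.e. `t` the Radon–Nikodym densities
`y ↦ dρ y/dν (t)` form a distribution function. The resulting Markov kernel `κ` gives the measure
`ν ⊗ κ` on the strip, and the measure on the plane is the sum over all strips.
-/

open ProbabilityTheory
open scoped ENNReal

theorem Monotone.le_of_eventually_eq_atTop {α β : Type*} [Preorder α] [IsDirectedOrder α]
    [Nonempty α] [Preorder β] {g : α → β} {b : β} (hg : Monotone g)
    (h : ∀ᶠ x in atTop, g x = b) (x : α) : g x ≤ b := by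
  obtain ⟨x', hx', hxx'⟩ := (h.and (eventually_ge_atTop x)).exists
  exact hx' ▸ hg hxx'

theorem Monotone.continuousWithinAt_Ici_of_tendsto {g : ℝ → ℝ} (hg : Monotone g) {x : ℝ}
    {u : ℕ → ℝ} (hu : ∀ k, x < u k) (hlim : Tendsto u atTop (𝓝 x))
    (hgu : Tendsto (fun k => g (u k)) atTop (𝓝 (g x))) : ContinuousWithinAt g (Ici x) x := by
  rw [← continuousWithinAt_Ioi_iff_Ici, hg.continuousWithinAt_Ioi_iff_rightLim_eq]
  exact tendsto_nhds_unique ((hg.tendsto_rightLim x).comp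
    (tendsto_nhdsWithin_of_tendsto_nhds_of_eventually_within _ hlim (Eventually.of_forall hu))) hgu

namespace MeasureTheory.Measure

variable {α : Type*} [MeasurableSpace α] {μ μ' ν : Measure α} [SigmaFinite ν]

theorem setLIntegral_rnDeriv_of_le (h : μ ≤ ν) (s : Set α) :
    ∫⁻ x in s, μ.rnDeriv ν x ∂ν = μ s :=
  have := sigmaFinite_of_le ν h
  setLIntegral_rnDeriv (absolutelyContinuous_of_le h) s

theorem rnDeriv_le_rnDeriv_of_le (h : μ ≤ μ') (h' : μ' ≤ ν) : μ.rnDeriv ν ≤ᵐ[ν] μ'.rnDeriv ν :=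
  ae_le_of_forall_setLIntegral_le_of_sigmaFinite (measurable_rnDeriv _ _) fun s _ _ => by
    rw [setLIntegral_rnDeriv_of_le h']
    exact (setLIntegral_rnDeriv_le s).trans (le_iff'.1 h s)

end MeasureTheory.Measure

section MonotoneFamily

variable {ν : Measure ℝ} {ρ : ℝ → Measure ℝ}

noncomputable def rnDerivRatCDF (ν : Measure ℝ) (ρ : ℝ → Measure ℝ) (t : ℝ) (q : ℚ) : ℝ :=
  ((ρ q).rnDeriv ν t).toReal

theorem measurable_rnDerivRatCDF : Measurable (rnDerivRatCDF ν ρ) :=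
  measurable_pi_lambda _ fun _ => (Measure.measurable_rnDeriv _ _).ennreal_toReal

theorem rnDeriv_ae_eq_iInf [IsLocallyFiniteMeasure ν] (hmono : Monotone ρ)
    (hle : ∀ y, ρ y ≤ ν) (hright : ∀ a b y, ContinuousWithinAt (ρ · (Ioc a b)) (Ici y) y)
    {u : ℕ → ℝ} {y : ℝ} (hu : Antitone u) (hyu : ∀ k, y ≤ u k) (hlim : Tendsto u atTop (𝓝 y)) :
    (ρ y).rnDeriv ν =ᵐ[ν] fun t => ⨅ k, (ρ (u k)).rnDeriv ν t := by
  have hmeas : ∀ k, Measurable ((ρ (u k)).rnDeriv ν) := fun k => Measure.measurable_rnDeriv _ _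
  have hle_iInf : (ρ y).rnDeriv ν ≤ᵐ[ν] fun t => ⨅ k, (ρ (u k)).rnDeriv ν t := by
    filter_upwards [ae_all_iff.2 fun k =>
      Measure.rnDeriv_le_rnDeriv_of_le (hmono (hyu k)) (hle _)] with t ht using le_iInf ht
  suffices h : ∀ n : ℤ, ∀ᵐ t ∂ν.restrict (Ioc (n : ℝ) (n + 1)),
      (ρ y).rnDeriv ν t = ⨅ k, (ρ (u k)).rnDeriv ν t by
    simpa [EventuallyEq, iUnion_Ioc_intCast] using (ae_restrict_iUnion_iff _ _).2 h
  intro n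
  set I := Ioc (n : ℝ) (n + 1)
  have hint : ∀ z, ∫⁻ t in I, (ρ z).rnDeriv ν t ∂ν = ρ z I :=
    fun z => Measure.setLIntegral_rnDeriv_of_le (hle z) I
  have hfin : ∀ z, ρ z I ≠ ∞ :=
    fun z => ((Measure.le_iff'.1 (hle z) I).trans_lt measure_Ioc_lt_top).ne
  -- both sides have integral `ρ y I` over `I`: monotone convergence and right continuity
  refine ae_eq_of_ae_le_of_lintegral_le (ae_restrict_of_ae hle_iInf) (by rw [hint]; exact hfin y)
    (Measurable.iInf hmeas).aemeasurable ?_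
  rw [lintegral_iInf_ae hmeas (fun k => ae_restrict_of_ae (Measure.rnDeriv_le_rnDeriv_of_le
    (hmono (hu k.le_succ)) (hle _))) (by rw [hint]; exact hfin _), hint]
  simp only [hint]
  have hρ : Tendsto (fun k => ρ (u k) I) atTop (𝓝 (ρ y I)) :=
    (hright _ _ y).tendsto.comp
      (tendsto_nhdsWithin_of_tendsto_nhds_of_eventually_within _ hlim (Eventually.of_forall hyu))
  exact ge_of_tendsto hρ (Eventually.of_forall fun k => iInf_le _ k)

theorem ae_forall_rnDeriv_eq_iInf_rat_gt [IsLocallyFiniteMeasure ν] (hmono : Monotone ρ)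
    (hle : ∀ y, ρ y ≤ ν) (hright : ∀ a b y, ContinuousWithinAt (ρ · (Ioc a b)) (Ici y) y) :
    ∀ᵐ t ∂ν, ∀ q : ℚ, ∃ r : ℕ → ℚ, (∀ k, q < r k) ∧
      (ρ q).rnDeriv ν t = ⨅ k, (ρ (r k)).rnDeriv ν t := by
  refine ae_all_iff.2 fun q => ?_
  obtain ⟨r, hr_anti, hr_gt, hr_lim⟩ :=
    Rat.denseRange_cast.exists_seq_strictAnti_tendsto Rat.cast_mono (q : ℝ)
  filter_upwards [rnDeriv_ae_eq_iInf hmono hle hright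
    (Rat.cast_mono.comp_antitone hr_anti.antitone) (fun k => (hr_gt k).le) hr_lim] with t ht
  exact ⟨r, fun k => Rat.cast_lt.1 (mem_Ioi.1 (hr_gt k)), ht⟩

theorem ae_isRatStieltjesPoint_rnDerivRatCDF [IsLocallyFiniteMeasure ν] (hmono : Monotone ρ)
    (hbot : ∀ᶠ y in atBot, ρ y = 0) (htop : ∀ᶠ y in atTop, ρ y = ν)
    (hright : ∀ a b y, ContinuousWithinAt (ρ · (Ioc a b)) (Ici y) y) :
    ∀ᵐ t ∂ν, IsRatStieltjesPoint (rnDerivRatCDF ν ρ) t := by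
  have hle := hmono.le_of_eventually_eq_atTop htop
  have h_fin : ∀ᵐ t ∂ν, ∀ q : ℚ, (ρ q).rnDeriv ν t ≠ ∞ :=
    ae_all_iff.2 fun q =>
      have := Measure.sigmaFinite_of_le ν (hle q)
      (Measure.rnDeriv_lt_top _ _).mono fun _ h => h.ne
  have h_mono : ∀ᵐ t ∂ν, ∀ q q' : ℚ, q ≤ q' → (ρ q).rnDeriv ν t ≤ (ρ q').rnDeriv ν t :=
    ae_all_iff.2 fun q => ae_all_iff.2 fun q' => eventually_imp_distrib_left.2 fun h =>
      Measure.rnDeriv_le_rnDeriv_of_le (hmono (Rat.cast_le.2 h)) (hle _)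
  have h_bot : ∀ᵐ t ∂ν, ∀ q : ℚ, ρ q = 0 → (ρ q).rnDeriv ν t = 0 :=
    ae_all_iff.2 fun q => eventually_imp_distrib_left.2 fun h => by
      rw [h]; exact Measure.rnDeriv_zero ν
  have h_top : ∀ᵐ t ∂ν, ∀ q : ℚ, ρ q = ν → (ρ q).rnDeriv ν t = 1 :=
    ae_all_iff.2 fun q => eventually_imp_distrib_left.2 fun h => by
      rw [h]; exact Measure.rnDeriv_self ν
  filter_upwards [h_fin, h_mono, h_bot, h_top, ae_forall_rnDeriv_eq_iInf_rat_gt hmono hle hright]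
    with t hfin hle_rat hzero hone hinf
  have hcdf_mono : Monotone (rnDerivRatCDF ν ρ t) :=
    fun q q' h => ENNReal.toReal_mono (hfin q') (hle_rat q q' h)
  refine ⟨hcdf_mono, tendsto_const_nhds.congr' ?_, tendsto_const_nhds.congr' ?_, fun q => ?_⟩
  · filter_upwards [htop.ratCast_atTop] with q hq
    simp [rnDerivRatCDF, hone q hq]
  · filter_upwards [hbot.ratCast_atBot] with q hq
    simp [rnDerivRatCDF, hzero q hq]
  · obtain ⟨r, hr_gt, hr⟩ := hinf q
    have hbdd : BddBelow (range fun r : Ioi q => rnDerivRatCDF ν ρ t r) :=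
      ⟨0, forall_mem_range.2 fun _ => ENNReal.toReal_nonneg⟩
    refine le_antisymm ?_ (le_ciInf fun r => hcdf_mono r.2.le)
    calc ⨅ r : Ioi q, rnDerivRatCDF ν ρ t r
        ≤ ⨅ k, rnDerivRatCDF ν ρ t (r k) := le_ciInf fun k => ciInf_le hbdd ⟨r k, hr_gt k⟩
      _ = rnDerivRatCDF ν ρ t q := by
        simp only [rnDerivRatCDF]
        rw [← ENNReal.toReal_iInf fun k => hfin _, ← hr]

noncomputable abbrev rnDerivStieltjes (ν : Measure ℝ) (ρ : ℝ → Measure ℝ) :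
    ℝ → StieltjesFunction ℝ :=
  stieltjesOfMeasurableRat (rnDerivRatCDF ν ρ) measurable_rnDerivRatCDF

noncomputable def rnDerivKernel (ν : Measure ℝ) (ρ : ℝ → Measure ℝ) : Kernel ℝ ℝ where
  toFun t := (rnDerivStieltjes ν ρ t).measure
  measurable' := measurable_measure_stieltjesOfMeasurableRat _

instance : IsMarkovKernel (rnDerivKernel ν ρ) :=
  ⟨fun t => inferInstanceAs (IsProbabilityMeasure (rnDerivStieltjes ν ρ t).measure)⟩

theorem ofReal_rnDerivStieltjes_ae_eq [IsLocallyFiniteMeasure ν] (hmono : Monotone ρ)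
    (hbot : ∀ᶠ y in atBot, ρ y = 0) (htop : ∀ᶠ y in atTop, ρ y = ν)
    (hright : ∀ a b y, ContinuousWithinAt (ρ · (Ioc a b)) (Ici y) y) (q : ℚ) :
    (fun t => ENNReal.ofReal (rnDerivStieltjes ν ρ t q)) =ᵐ[ν] (ρ q).rnDeriv ν := by
  have := Measure.sigmaFinite_of_le ν (hmono.le_of_eventually_eq_atTop htop q)
  filter_upwards [ae_isRatStieltjesPoint_rnDerivRatCDF hmono hbot htop hright,
    Measure.rnDeriv_lt_top (ρ q) ν] with t ht hfin
  rw [rnDerivStieltjes, stieltjesOfMeasurableRat_eq, toRatCDF_of_isRatStieltjesPoint ht,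
    rnDerivRatCDF, ENNReal.ofReal_toReal hfin.ne]

theorem setLIntegral_rnDerivStieltjes [IsLocallyFiniteMeasure ν] (hmono : Monotone ρ)
    (hbot : ∀ᶠ y in atBot, ρ y = 0) (htop : ∀ᶠ y in atTop, ρ y = ν)
    (hright : ∀ a b y, ContinuousWithinAt (ρ · (Ioc a b)) (Ici y) y) (a b y : ℝ) :
    ∫⁻ t in Ioc a b, ENNReal.ofReal (rnDerivStieltjes ν ρ t y) ∂ν = ρ y (Ioc a b) := by
  obtain ⟨r, -, hr_gt, hr_lim⟩ :=
    Rat.denseRange_cast.exists_seq_strictAnti_tendsto Rat.cast_mono y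
  have hr_lim' : Tendsto (fun k => (r k : ℝ)) atTop (𝓝[≥] y) :=
    tendsto_nhdsWithin_of_tendsto_nhds_of_eventually_within _ hr_lim
      (Eventually.of_forall fun k => (mem_Ioi.1 (hr_gt k)).le)
  have hrat : ∀ k, ∫⁻ t in Ioc a b, ENNReal.ofReal (rnDerivStieltjes ν ρ t (r k)) ∂ν
      = ρ (r k) (Ioc a b) := fun k => by
    rw [lintegral_congr_ae (ae_restrict_of_ae
      (ofReal_rnDerivStieltjes_ae_eq hmono hbot htop hright (r k)))]
    exact Measure.setLIntegral_rnDeriv_of_le (hmono.le_of_eventually_eq_atTop htop _) _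
  have hlim := tendsto_lintegral_of_dominated_convergence (μ := ν.restrict (Ioc a b))
    (fun _ => 1) (fun k => (measurable_stieltjesOfMeasurableRat _ _).ennreal_ofReal)
    (fun k => ae_of_all _ fun t =>
      ENNReal.ofReal_le_one.2 (stieltjesOfMeasurableRat_le_one _ _ _))
    (by simpa using measure_Ioc_lt_top.ne)
    (ae_of_all _ fun t => ENNReal.tendsto_ofReal
      (((rnDerivStieltjes ν ρ t).right_continuous y).tendsto.comp hr_lim'))
  simp only [hrat] at hlim
  exact tendsto_nhds_unique hlim ((hright a b y).tendsto.comp hr_lim')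

theorem exists_measure_Ioc_prod_Ioc_eq_sub [IsLocallyFiniteMeasure ν] (hmono : Monotone ρ)
    (hbot : ∀ᶠ y in atBot, ρ y = 0) (htop : ∀ᶠ y in atTop, ρ y = ν)
    (hright : ∀ a b y, ContinuousWithinAt (ρ · (Ioc a b)) (Ici y) y) :
    ∃ μ : Measure (ℝ × ℝ), ∀ a b y₁ y₂, y₁ ≤ y₂ →
      μ (Ioc a b ×ˢ Ioc y₁ y₂) = ρ y₂ (Ioc a b) - ρ y₁ (Ioc a b) := by
  refine ⟨ν ⊗ₘ rnDerivKernel ν ρ, fun a b y₁ y₂ hy => ?_⟩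
  have hint := setLIntegral_rnDerivStieltjes hmono hbot htop hright a b
  have hker : ∀ t, rnDerivKernel ν ρ t (Ioc y₁ y₂) =
      ENNReal.ofReal (rnDerivStieltjes ν ρ t y₂) - ENNReal.ofReal (rnDerivStieltjes ν ρ t y₁) :=
    fun t => by
      rw [← ENNReal.ofReal_sub _ (stieltjesOfMeasurableRat_nonneg _ _ _)]
      exact StieltjesFunction.measure_Ioc _ _ _
  rw [Measure.compProd_apply_prod measurableSet_Ioc measurableSet_Ioc]
  simp only [hker]
  have hfin : ρ y₁ (Ioc a b) ≠ ∞ :=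
    ((Measure.le_iff'.1 (hmono.le_of_eventually_eq_atTop htop y₁) _).trans_lt
      measure_Ioc_lt_top).ne
  rw [lintegral_sub (measurable_stieltjesOfMeasurableRat _ _).ennreal_ofReal (hint y₁ ▸ hfin)
    (ae_of_all _ fun t => ENNReal.ofReal_le_ofReal ((rnDerivStieltjes ν ρ t).mono hy)),
    hint, hint]

end MonotoneFamily

section ClampStrips

variable {α : Type*} [LinearOrder α]

def clampIcc (a b x : α) : α := max a (min x b)

theorem clampIcc_of_le {a b x : α} (h : x ≤ a) : clampIcc a b x = a :=
  max_eq_left (min_le_of_left_le h)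

theorem clampIcc_of_ge {a b x : α} (hab : a ≤ b) (h : b ≤ x) : clampIcc a b x = b := by
  rw [clampIcc, min_eq_right h, max_eq_right hab]

theorem le_clampIcc (a b x : α) : a ≤ clampIcc a b x := le_max_left _ _

theorem monotone_clampIcc (a b : α) : Monotone (clampIcc a b) :=
  fun _ _ h => max_le_max le_rfl (min_le_min h le_rfl)

theorem continuous_clampIcc [TopologicalSpace α] [OrderClosedTopology α] (a b : α) :
    Continuous (clampIcc a b) :=
  continuous_const.max (continuous_id.min continuous_const)

/-- `[a, b] ∩ [c, d]` is cut out of `[a, b]` by clamping `c, d` and out of `[c, d]` by clamping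
`a, b`; when the intersection is empty both pairs degenerate. -/
theorem clampIcc_comm {a b c d : α} (hab : a ≤ b) (hcd : c ≤ d) :
    (clampIcc a b c = clampIcc c d a ∧ clampIcc a b d = clampIcc c d b) ∨
      (clampIcc a b c = clampIcc a b d ∧ clampIcc c d a = clampIcc c d b) := by
  simp only [clampIcc]
  rcases le_total b c with h | h
  · right; constructor <;> simp [*, h.trans hcd, hab.trans h]
  rcases le_total d a with h' | h'
  · right; constructor <;> simp [*, hcd.trans h', h'.trans hab]
  · left; constructor
    · simp [*, max_comm]
    · simp [*, min_comm]

end ClampStrips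

section AdditiveIntervalFunction

variable {α M : Type*} [LinearOrder α] [AddCommMonoid M] {w : α → α → M}

theorem sum_Ico_eq_of_additive (hadd : ∀ x y z, x ≤ y → y ≤ z → w x z = w x y + w y z)
    (hself : ∀ x, w x x = 0) {Y : ℤ → α} (hY : Monotone Y) {N₁ N₂ : ℤ} (h : N₁ ≤ N₂) :
    ∑ n ∈ Finset.Ico N₁ N₂, w (Y n) (Y (n + 1)) = w (Y N₁) (Y N₂) := by
  induction N₂, h using Int.leInduction with
  | base => simp [hself]
  | succ N hN ih =>
    rw [← Finset.insert_Ico_right_eq_Ico_add_one hN, Finset.sum_insert Finset.right_notMem_Ico,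
      ih, add_comm, ← hadd _ _ _ (hY hN) (hY (Int.le_add_one le_rfl))]

theorem tsum_clampIcc_strips [TopologicalSpace M] {w : ℝ → ℝ → M}
    (hadd : ∀ x y z, x ≤ y → y ≤ z → w x z = w x y + w y z) (hself : ∀ x, w x x = 0)
    {c d : ℝ} (hcd : c ≤ d) :
    ∑' n : ℤ, w (clampIcc (n : ℝ) (n + 1) c) (clampIcc (n : ℝ) (n + 1) d) = w c d := by
  obtain ⟨Y, hY⟩ : ∃ Y : ℤ → ℝ, ∀ n, Y n = clampIcc c d n := ⟨_, fun _ => rfl⟩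
  have hterm : ∀ n : ℤ,
      w (clampIcc (n : ℝ) (n + 1) c) (clampIcc (n : ℝ) (n + 1) d) = w (Y n) (Y (n + 1)) := by
    intro n
    rw [hY, hY, Int.cast_add, Int.cast_one]
    rcases clampIcc_comm (by linarith : (n : ℝ) ≤ n + 1) hcd with ⟨h₁, h₂⟩ | ⟨h₁, h₂⟩
    · rw [h₁, h₂]
    · rw [h₁, h₂, hself, hself]
  have hsupp : ∀ n ∉ Finset.Ico ⌊c⌋ ⌈d⌉, w (Y n) (Y (n + 1)) = 0 := by
    intro n hn
    suffices Y n = Y (n + 1) by rw [this, hself]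
    rw [hY, hY, Int.cast_add, Int.cast_one]
    rw [Finset.mem_Ico, not_and_or, not_le, not_lt] at hn
    rcases hn with hn | hn
    · have h₁ : (n : ℝ) + 1 ≤ c := by exact_mod_cast Int.le_floor.1 hn
      rw [clampIcc_of_le h₁, clampIcc_of_le (by linarith)]
    · have h₁ : d ≤ (n : ℝ) := Int.ceil_le.1 hn
      rw [clampIcc_of_ge hcd h₁, clampIcc_of_ge hcd (by linarith)]
  have hmono : Monotone Y := fun m n h => by
    rw [hY, hY]
    exact monotone_clampIcc c d (Int.cast_le.2 h)
  rw [tsum_congr hterm, tsum_eq_sum hsupp, sum_Ico_eq_of_additive hadd hself hmono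
    ((Int.floor_le_floor hcd).trans (Int.floor_le_ceil d)), hY, hY,
    clampIcc_of_le (Int.floor_le c), clampIcc_of_ge hcd (Int.le_ceil d)]

end AdditiveIntervalFunction

section AdditiveMeasureFamily

variable {m : ℝ → ℝ → Measure ℝ} [∀ c d, IsLocallyFiniteMeasure (m c d)]

theorem exists_measure_strip (hadd : ∀ c d e, c ≤ d → d ≤ e → m c e = m c d + m d e)
    (hself : ∀ c, m c c = 0)
    (hright : ∀ a b c d, c ≤ d → ContinuousWithinAt (m c · (Ioc a b)) (Ici d) d) (n : ℝ) :
    ∃ μ : Measure (ℝ × ℝ), ∀ a b c d, c ≤ d →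
      μ (Ioc a b ×ˢ Ioc c d) = m (clampIcc n (n + 1) c) (clampIcc n (n + 1) d) (Ioc a b) := by
  have hn : n ≤ n + 1 := by linarith
  obtain ⟨μ, hμ⟩ := exists_measure_Ioc_prod_Ioc_eq_sub (ν := m n (n + 1))
    (ρ := fun y => m n (clampIcc n (n + 1) y))
    (fun y y' h => by
      dsimp only
      rw [hadd _ _ _ (le_clampIcc _ _ y) (monotone_clampIcc _ _ h)]
      exact Measure.le_add_right le_rfl)
    ((eventually_le_atBot n).mono fun y hy => by simp only [clampIcc_of_le hy, hself])
    ((eventually_ge_atTop (n + 1)).mono fun y hy => by simp only [clampIcc_of_ge hn hy])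
    (fun a b y => (hright a b n _ (le_clampIcc _ _ y)).comp
      (continuous_clampIcc _ _).continuousWithinAt
      fun _ hz => monotone_clampIcc _ _ (mem_Ici.1 hz))
  refine ⟨μ, fun a b c d hcd => ?_⟩
  rw [hμ a b c d hcd, hadd _ _ _ (le_clampIcc _ _ c) (monotone_clampIcc _ _ hcd),
    Measure.add_apply, ENNReal.add_sub_cancel_left measure_Ioc_lt_top.ne]

theorem exists_measure_Ioc_prod_Ioc_of_additive
    (hadd : ∀ c d e, c ≤ d → d ≤ e → m c e = m c d + m d e) (hself : ∀ c, m c c = 0)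
    (hright : ∀ a b c d, c ≤ d → ContinuousWithinAt (m c · (Ioc a b)) (Ici d) d) :
    ∃ μ : Measure (ℝ × ℝ), ∀ a b c d, c ≤ d → μ (Ioc a b ×ˢ Ioc c d) = m c d (Ioc a b) := by
  choose μ hμ using fun n : ℤ => exists_measure_strip hadd hself hright n
  refine ⟨Measure.sum μ, fun a b c d hcd => ?_⟩
  rw [Measure.sum_apply _ (measurableSet_Ioc.prod measurableSet_Ioc)]
  simp only [hμ _ a b c d hcd]
  exact tsum_clampIcc_strips (w := fun c d => m c d (Ioc a b))
    (fun x y z hxy hyz => by rw [hadd x y z hxy hyz, Measure.add_apply])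
    (fun x => by rw [hself, Measure.coe_zero, Pi.zero_apply]) hcd

end AdditiveMeasureFamily

namespace Inc2

variable {G : ℝ → ℝ → ℝ}

theorem monotone_sub_snd (hG : Inc2 G) {c d : ℝ} (h : c ≤ d) :
    Monotone fun t => G t d - G t c := fun t t' ht => by
  have := hG t t' c d ht h
  rw [mixedInc] at this
  linarith

theorem monotone_sub_fst (hG : Inc2 G) {a b : ℝ} (h : a ≤ b) :
    Monotone fun y => G b y - G a y := fun y y' hy => by
  have := hG a b y y' h hy
  rw [mixedInc] at this
  linarith

section Slice

variable (hG : Inc2 G)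
  (hG₁ : ∀ c d x, c ≤ d → ContinuousWithinAt (fun t => G t d - G t c) (Ici x) x)

noncomputable def sliceStieltjes (c d : ℝ) : StieltjesFunction ℝ where
  toFun t := G t (max c d) - G t c
  mono' := hG.monotone_sub_snd (le_max_left c d)
  right_continuous' x := hG₁ c _ x (le_max_left c d)

theorem sliceStieltjes_apply (c d t : ℝ) :
    hG.sliceStieltjes hG₁ c d t = G t (max c d) - G t c := rfl

theorem sliceStieltjes_measure_Ioc {c d : ℝ} (hcd : c ≤ d) (a b : ℝ) :
    (hG.sliceStieltjes hG₁ c d).measure (Ioc a b) = ENNReal.ofReal (mixedInc G a b c d) := by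
  rw [StieltjesFunction.measure_Ioc]
  congr 1
  simp only [sliceStieltjes_apply, max_eq_right hcd, mixedInc]
  ring

theorem sliceStieltjes_add {c d e : ℝ} (hcd : c ≤ d) (hde : d ≤ e) :
    hG.sliceStieltjes hG₁ c e = hG.sliceStieltjes hG₁ c d + hG.sliceStieltjes hG₁ d e := by
  ext t
  simp only [sliceStieltjes_apply, StieltjesFunction.add_apply,
    max_eq_right hcd, max_eq_right hde, max_eq_right (hcd.trans hde)]
  ring

theorem sliceStieltjes_self (c : ℝ) : hG.sliceStieltjes hG₁ c c = 0 := by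
  ext t
  simp [sliceStieltjes_apply]

theorem continuousWithinAt_sliceStieltjes_measure_Ioc
    (hG₂ : ∀ a b y, a ≤ b → ContinuousWithinAt (fun y => G b y - G a y) (Ici y) y)
    (a b : ℝ) {c d : ℝ} (hcd : c ≤ d) :
    ContinuousWithinAt (fun d' => (hG.sliceStieltjes hG₁ c d').measure (Ioc a b)) (Ici d) d := by
  rcases le_total a b with hab | hab
  · have hmixed : ContinuousWithinAt (fun d' => mixedInc G a b c d') (Ici d) d := by
      have : (fun d' => mixedInc G a b c d') =
          fun d' => (G b d' - G a d') - (G b c - G a c) := by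
        funext d'
        rw [mixedInc]
        ring
      rw [this]
      exact (hG₂ a b d hab).sub continuousWithinAt_const
    refine (ENNReal.continuous_ofReal.continuousAt.comp_continuousWithinAt hmixed).congr
      (fun d' hd' => ?_) ?_
    · exact sliceStieltjes_measure_Ioc hG hG₁ (hcd.trans hd') a b
    · exact sliceStieltjes_measure_Ioc hG hG₁ hcd a b
  · simp only [Ioc_eq_empty_of_le hab, measure_empty]
    exact continuousWithinAt_const

end Slice

theorem exists_measure_Ioc_prod_Ioc (hG : Inc2 G)
    (hG₁ : ∀ c d x, c ≤ d → ContinuousWithinAt (fun t => G t d - G t c) (Ici x) x)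
    (hG₂ : ∀ a b y, a ≤ b → ContinuousWithinAt (fun y => G b y - G a y) (Ici y) y) :
    ∃ μ : Measure (ℝ × ℝ), ∀ a b c d, c ≤ d →
      μ (Ioc a b ×ˢ Ioc c d) = ENNReal.ofReal (mixedInc G a b c d) := by
  obtain ⟨μ, hμ⟩ := exists_measure_Ioc_prod_Ioc_of_additive
    (m := fun c d => (hG.sliceStieltjes hG₁ c d).measure)
    (fun c d e hcd hde => by
      rw [← StieltjesFunction.measure_add, sliceStieltjes_add hG hG₁ hcd hde])
    (fun c => by rw [sliceStieltjes_self, StieltjesFunction.measure_zero])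
    (fun a b c d hcd => hG.continuousWithinAt_sliceStieltjes_measure_Ioc hG₁ hG₂ a b hcd)
  exact ⟨μ, fun a b c d hcd => by rw [hμ a b c d hcd, sliceStieltjes_measure_Ioc hG hG₁ hcd]⟩

end Inc2

section Reflection

variable {f : ℝ → ℝ → ℝ}

theorem mixedInc_comp_neg (a b c d : ℝ) :
    mixedInc (fun t y => f (-t) (-y)) a b c d = mixedInc f (-b) (-a) (-d) (-c) := by
  simp only [mixedInc]
  ring

theorem Inc2.comp_neg (hf : Inc2 f) : Inc2 fun t y => f (-t) (-y) := fun a b c d hab hcd => by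
  rw [mixedInc_comp_neg]
  exact hf _ _ _ _ (neg_le_neg hab) (neg_le_neg hcd)

theorem tendsto_comp_neg_of_leftCont2At (hlc : ∀ s x, LeftCont2At f s x) {s x : ℝ}
    {u v : ℕ → ℝ} (hu : Antitone u) (hv : Antitone v) (hsu : ∀ k, s ≤ u k) (hxv : ∀ k, x ≤ v k)
    (hu' : Tendsto u atTop (𝓝 s)) (hv' : Tendsto v atTop (𝓝 x)) :
    Tendsto (fun k => f (-u k) (-v k)) atTop (𝓝 (f (-s) (-x))) :=
  hlc (-s) (-x) (fun k => -u k) (fun k => -v k) (fun _ _ h => neg_le_neg (hu h))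
    (fun _ _ h => neg_le_neg (hv h)) (fun k => neg_le_neg (hsu k)) (fun k => neg_le_neg (hxv k))
    hu'.neg hv'.neg

theorem continuousWithinAt_sub_snd_comp_neg (hinc : Inc2 f) (hlc : ∀ s x, LeftCont2At f s x)
    {c d : ℝ} (hcd : c ≤ d) (x : ℝ) :
    ContinuousWithinAt (fun t => f (-t) (-d) - f (-t) (-c)) (Ici x) x := by
  obtain ⟨u, hu, hxu, hlim⟩ := exists_seq_strictAnti_tendsto x
  have h := fun y => tendsto_comp_neg_of_leftCont2At hlc hu.antitone antitone_const
    (fun k => (hxu k).le) (fun _ => le_refl y) hlim tendsto_const_nhds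
  exact (hinc.comp_neg.monotone_sub_snd hcd).continuousWithinAt_Ici_of_tendsto hxu hlim
    ((h d).sub (h c))

theorem continuousWithinAt_sub_fst_comp_neg (hinc : Inc2 f) (hlc : ∀ s x, LeftCont2At f s x)
    {a b : ℝ} (hab : a ≤ b) (y : ℝ) :
    ContinuousWithinAt (fun y => f (-b) (-y) - f (-a) (-y)) (Ici y) y := by
  obtain ⟨v, hv, hyv, hlim⟩ := exists_seq_strictAnti_tendsto y
  have h := fun s => tendsto_comp_neg_of_leftCont2At hlc antitone_const hv.antitone
    (fun _ => le_refl s) (fun k => (hyv k).le) tendsto_const_nhds hlim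
  exact (hinc.comp_neg.monotone_sub_fst hab).continuousWithinAt_Ici_of_tendsto hyv hlim
    ((h b).sub (h a))

end Reflection

/-- A left continuous, two-dimensionally monotonically increasing function generates a
countably additive Borel measure on `ℝ²` whose value on half-open rectangles is
the mixed second-order increment. -/
theorem exists_lebesgue_stieltjes_measure (f : ℝ → ℝ → ℝ)
    (hinc : Inc2 f) (hlc : ∀ s x : ℝ, LeftCont2At f s x) :
    ∃ μ : Measure (ℝ × ℝ),
      ∀ s₁ s₂ x₁ x₂ : ℝ, s₁ < s₂ → x₁ < x₂ →
        μ (Set.Ico s₁ s₂ ×ˢ Set.Ico x₁ x₂) =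
          ENNReal.ofReal (mixedInc f s₁ s₂ x₁ x₂) := by
  obtain ⟨μ, hμ⟩ := hinc.comp_neg.exists_measure_Ioc_prod_Ioc
    (fun _ _ x hcd => continuousWithinAt_sub_snd_comp_neg hinc hlc hcd x)
    (fun _ _ y hab => continuousWithinAt_sub_fst_comp_neg hinc hlc hab y)
  refine ⟨μ.map Neg.neg, fun s₁ s₂ x₁ x₂ _ hx => ?_⟩
  rw [Measure.map_apply measurable_neg (measurableSet_Ico.prod measurableSet_Ico),
    neg_preimage, neg_prod, neg_Ico, neg_Ico, hμ _ _ _ _ (neg_le_neg hx.le), mixedInc_comp_neg]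
  simp only [neg_neg]
end

section
/- Suppose f : ℝ² → ℝ has locally bounded two-dimensional variation and is left continuous on the quarter space {(s,x) : s ≥ t, x ≥ a}. Define f_i(s,x) = lim_{t'↑s, y↑x} f̃_i(t',y) where f̃₁ = (V_f + f)/2 and f̃₂ = (V_f − f)/2 (variation measured from the corner (t,a)). Then f₁ and f₂ are monotonically increasing in the two-dimensional sense, left continuous, and f(s,x) = f₁(s,x) − f₂(s,x) for all (s,x) in the interior of the quarter space. -/
open MeasureTheory Set Filter Topology Real

/-!
Write `V(s, x)` for the variation of `f` over `[t, s] × [a, x]`. Variation is additive when a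
rectangle is cut along either axis, so the mixed increment of `V` over a rectangle is the
variation of `f` over that rectangle, which dominates `|mixedInc f|`; thus `V ± f` are
increasing in the two-dimensional sense. Since `V` is increasing in both variables, its joint left
limit `L` exists and is left continuous, and by left continuity of `f` the mixed increments of
`L` still dominate `|mixedInc f|` on the open quarter. Then take `f₁ = (L + f) / 2` and
`f₂ = (L - f) / 2`.
-/

section ChainSum

variable {α M : Type*} [AddCommMonoid M]

def chainSum (F : α → α → M) : List α → M
  | a :: b :: l => F a b + chainSum F (b :: l)
  | _ => 0

@[simp] lemma chainSum_nil (F : α → α → M) : chainSum F [] = 0 := rfl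

@[simp] lemma chainSum_singleton (F : α → α → M) (a : α) : chainSum F [a] = 0 := rfl

@[simp] lemma chainSum_cons_cons (F : α → α → M) (a b : α) (l : List α) :
    chainSum F (a :: b :: l) = F a b + chainSum F (b :: l) := rfl

@[simp] lemma chainSum_zero (l : List α) : chainSum (fun _ _ => (0 : M)) l = 0 := by
  induction l with
  | nil => rfl
  | cons a l ih => cases l <;> simp_all

lemma chainSum_add (F G : α → α → M) (l : List α) :
    chainSum (fun a b => F a b + G a b) l = chainSum F l + chainSum G l := by
  induction l with
  | nil => simp
  | cons a l ih =>
    cases l with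
    | nil => simp
    | cons b l => simp only [chainSum_cons_cons, ih]; abel

lemma chainSum_comm {β : Type*} (G : α → α → β → β → M) (l₁ : List α) (l₂ : List β) :
    chainSum (fun p q => chainSum (G p q) l₂) l₁ =
      chainSum (fun u v => chainSum (fun p q => G p q u v) l₁) l₂ := by
  induction l₁ with
  | nil => simp
  | cons a l ih =>
    cases l with
    | nil => simp
    | cons b l => rw [chainSum_cons_cons, ih, ← chainSum_add]; rfl

lemma chainSum_le_cons [PartialOrder M] [CanonicallyOrderedAdd M] (F : α → α → M) (a : α)
    (l : List α) : chainSum F l ≤ chainSum F (a :: l) := by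
  cases l with
  | nil => simp
  | cons b l => exact le_add_self

lemma chainSum_mono [PartialOrder M] [IsOrderedAddMonoid M] {F G : α → α → M}
    (h : ∀ a b, F a b ≤ G a b) (l : List α) : chainSum F l ≤ chainSum G l := by
  induction l with
  | nil => simp
  | cons a l ih =>
    cases l with
    | nil => simp
    | cons b l => exact add_le_add (h a b) ih

lemma sum_fin_eq_chainSum_ofFn (F : α → α → M) :
    ∀ {m : ℕ} (σ : Fin (m + 1) → α),
      ∑ i : Fin m, F (σ i.castSucc) (σ i.succ) = chainSum F (List.ofFn σ)
  | 0, σ => by simp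
  | m + 1, σ => by
    have ih := sum_fin_eq_chainSum_ofFn F (fun i => σ i.succ)
    rw [List.ofFn_succ (n := m)] at ih
    rw [Fin.sum_univ_succ, List.ofFn_succ, List.ofFn_succ, chainSum_cons_cons, ← ih]
    simp

section Subadditive

variable [PartialOrder M] [CanonicallyOrderedAdd M] [IsOrderedAddMonoid M] {F : α → α → M}

lemma chainSum_cons_le (hF : ∀ a b c, F a c ≤ F a b + F b c) (a b : α) (l : List α) :
    chainSum F (a :: l) ≤ F a b + chainSum F (b :: l) := by
  cases l with
  | nil => simp
  | cons c l =>
    rw [chainSum_cons_cons, chainSum_cons_cons, ← add_assoc]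
    exact add_le_add (hF a b c) le_rfl

lemma List.Sublist.chainSum_cons_le_cons (hF : ∀ a b c, F a c ≤ F a b + F b c)
    {l₁ l₂ : List α} (h : l₁.Sublist l₂) (a : α) :
    chainSum F (a :: l₁) ≤ chainSum F (a :: l₂) := by
  induction h generalizing a with
  | slnil => rfl
  | cons b _ ih => exact (chainSum_cons_le hF a b _).trans (add_le_add le_rfl (ih b))
  | cons_cons b _ ih => exact add_le_add le_rfl (ih b)

lemma List.Sublist.chainSum_le (hF : ∀ a b c, F a c ≤ F a b + F b c) {l₁ l₂ : List α}
    (h : l₁.Sublist l₂) : chainSum F l₁ ≤ chainSum F l₂ := by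
  induction h with
  | slnil => rfl
  | cons b _ ih => exact ih.trans (chainSum_le_cons F b _)
  | cons_cons a h _ => exact h.chainSum_cons_le_cons hF a

end Subadditive

section LinearOrder

variable [LinearOrder α]

lemma chainSum_eq_add_filter (F : α → α → M) {c : α} :
    ∀ {l : List α}, l.Pairwise (· < ·) → c ∈ l →
      chainSum F l = chainSum F (l.filter (· ≤ c)) + chainSum F (l.filter (c ≤ ·))
  | [], _, hc => by simp at hc
  | x :: l, hl, hc => by
    obtain ⟨hx, hl⟩ := List.pairwise_cons.1 hl
    rcases List.mem_cons.1 hc with rfl | hc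
    · have h₁ : l.filter (· ≤ c) = [] := List.filter_eq_nil_iff.2 fun y hy => by
        simpa using hx y hy
      have h₂ : l.filter (c ≤ ·) = l := List.filter_eq_self.2 fun y hy => by
        simpa using (hx y hy).le
      simp [h₁, h₂]
    · obtain ⟨y, l, rfl⟩ := List.exists_cons_of_ne_nil (List.ne_nil_of_mem hc)
      have hxc : x < c := hx c hc
      have hyc : y ≤ c := by
        rcases List.mem_cons.1 hc with rfl | hc
        · exact le_rfl
        · exact ((List.pairwise_cons.1 hl).1 c hc).le
      rw [chainSum_cons_cons, chainSum_eq_add_filter F hl hc]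
      simp [List.filter_cons, hxc.le, hyc, not_le.2 hxc, add_assoc]

lemma Finset.sort_filter (P : Finset α) (p : α → Prop) [DecidablePred p] :
    (P.filter p).sort = P.sort.filter p := by
  have h := (List.toFinset_sort (· ≤ ·) ((P.sort_nodup (· ≤ ·)).filter p)).2
    ((P.pairwise_sort (· ≤ ·)).filter p)
  simpa [List.toFinset_filter] using h

lemma chainSum_sort_eq_add_filter (F : α → α → M) {P : Finset α} {c : α} (hc : c ∈ P) :
    chainSum F P.sort = chainSum F (P.filter (· ≤ c)).sort +
      chainSum F (P.filter (c ≤ ·)).sort := by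
  rw [Finset.sort_filter, Finset.sort_filter]
  exact chainSum_eq_add_filter F (P.sortedLT_sort.pairwise) (P.mem_sort _ |>.2 hc)

lemma chainSum_sort_mono [PartialOrder M] [CanonicallyOrderedAdd M] [IsOrderedAddMonoid M]
    {F : α → α → M} (hF : ∀ a b c, F a c ≤ F a b + F b c) {P P' : Finset α} (h : P ⊆ P') :
    chainSum F P.sort ≤ chainSum F P'.sort := by
  refine (List.sublist_of_subperm_of_pairwise ?_ (P.pairwise_sort _)
    (P'.pairwise_sort _)).chainSum_le hF
  exact List.subperm_of_subset (P.sort_nodup _) fun y hy => by simpa using h (by simpa using hy)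

lemma StrictMono.finsetSort_image_univ {n : ℕ} {σ : Fin n → α} (hσ : StrictMono σ) :
    (Finset.univ.image σ).sort = List.ofFn σ := by
  have h : Finset.univ.image σ = Finset.univ.map ⟨σ, hσ.injective⟩ := by
    ext; simp
  rw [h, ← (hσ.strictMonoOn _).map_finsetSort, Fin.sort_univ, List.ofFn_eq_map]
  rfl

end LinearOrder

end ChainSum

lemma mixedInc_add_mixedInc_fst (f : ℝ → ℝ → ℝ) (p q r u v : ℝ) :
    mixedInc f p q u v + mixedInc f q r u v = mixedInc f p r u v := by
  unfold mixedInc; ring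

lemma mixedInc_add_mixedInc_snd (f : ℝ → ℝ → ℝ) (p q u v w : ℝ) :
    mixedInc f p q u v + mixedInc f p q v w = mixedInc f p q u w := by
  unfold mixedInc; ring

lemma mixedInc_flip (f : ℝ → ℝ → ℝ) (p q u v : ℝ) :
    mixedInc (fun y r => f r y) u v p q = mixedInc f p q u v := by
  unfold mixedInc; ring

@[simp] lemma mixedInc_self_fst (f : ℝ → ℝ → ℝ) (p u v : ℝ) : mixedInc f p p u v = 0 := by
  unfold mixedInc; ring

@[simp] lemma mixedInc_self_snd (f : ℝ → ℝ → ℝ) (p q u : ℝ) : mixedInc f p q u u = 0 := by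
  unfold mixedInc; ring

-- Grid partitions are encoded as finite sets of points (see `var2_eq_iSup_gridSum`), so that
-- refining a partition is `⊆` and joining two partitions is `∪`.
noncomputable def gridSum (f : ℝ → ℝ → ℝ) (P Q : Finset ℝ) : ENNReal :=
  chainSum (fun p q => chainSum (fun u v => ENNReal.ofReal |mixedInc f p q u v|)
    Q.sort) P.sort

lemma gridSum_mono (f : ℝ → ℝ → ℝ) {P P' Q Q' : Finset ℝ} (hP : P ⊆ P') (hQ : Q ⊆ Q') :
    gridSum f P Q ≤ gridSum f P' Q' := by
  have abs_le : ∀ {A B C : ℝ}, A + B = C → ENNReal.ofReal |C| ≤ .ofReal |A| + .ofReal |B| :=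
    fun h => by
      rw [← ENNReal.ofReal_add (abs_nonneg _) (abs_nonneg _), ← h]
      exact ENNReal.ofReal_le_ofReal (abs_add_le _ _)
  refine (chainSum_sort_mono (fun p q r => ?_) hP).trans
    (chainSum_mono (fun p q => chainSum_sort_mono (fun u v w => ?_) hQ) _)
  · rw [← chainSum_add]
    exact chainSum_mono (fun u v => abs_le (mixedInc_add_mixedInc_fst f p q r u v)) _
  · exact abs_le (mixedInc_add_mixedInc_snd f p q u v w)

lemma gridSum_eq_add_filter (f : ℝ → ℝ → ℝ) {P : Finset ℝ} (Q : Finset ℝ) {c : ℝ} (hc : c ∈ P) :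
    gridSum f P Q = gridSum f (P.filter (· ≤ c)) Q + gridSum f (P.filter (c ≤ ·)) Q :=
  chainSum_sort_eq_add_filter _ hc

lemma gridSum_flip (f : ℝ → ℝ → ℝ) (P Q : Finset ℝ) :
    gridSum (fun y r => f r y) Q P = gridSum f P Q := by
  simp only [gridSum, mixedInc_flip]
  exact (chainSum_comm _ _ _).symm

lemma gridSum_pair (f : ℝ → ℝ → ℝ) {p q u v : ℝ} (hpq : p < q) (huv : u < v) :
    gridSum f {p, q} {u, v} = ENNReal.ofReal |mixedInc f p q u v| := by
  have sort_pair : ∀ {a b : ℝ}, a < b → ({a, b} : Finset ℝ).sort = [a, b] := fun h => by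
    rw [Finset.sort_insert _ (by simpa using h.le) (by simpa using h.ne), Finset.sort_singleton]
  simp [gridSum, sort_pair hpq, sort_pair huv]

def IsPartition (t s : ℝ) (P : Finset ℝ) : Prop :=
  t ∈ P ∧ s ∈ P ∧ ∀ y ∈ P, t ≤ y ∧ y ≤ s

namespace IsPartition

variable {t s c : ℝ} {P : Finset ℝ}

lemma le (hP : IsPartition t s P) : t ≤ s := (hP.2.2 s hP.2.1).1

lemma pair (h : t ≤ s) : IsPartition t s {t, s} :=
  ⟨by simp, by simp, by simp [h]⟩

lemma insert (hP : IsPartition t s P) (ht : t ≤ c) (hc : c ≤ s) : IsPartition t s (insert c P) :=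
  ⟨by simp [hP.1], by simp [hP.2.1], by simpa [ht, hc] using hP.2.2⟩

lemma union {t' s' : ℝ} {P' : Finset ℝ} (hP : IsPartition t s P) (hP' : IsPartition t' s' P')
    (ht : t ≤ t') (hs : s ≤ s') : IsPartition t s' (P ∪ P') := by
  refine ⟨by simp [hP.1], by simp [hP'.2.1], fun y hy => ?_⟩
  rcases Finset.mem_union.1 hy with hy | hy
  · exact ⟨(hP.2.2 y hy).1, (hP.2.2 y hy).2.trans hs⟩
  · exact ⟨ht.trans (hP'.2.2 y hy).1, (hP'.2.2 y hy).2⟩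

lemma filter_le (hP : IsPartition t s P) (hc : c ∈ P) : IsPartition t c (P.filter (· ≤ c)) :=
  ⟨by simp [hP.1, (hP.2.2 c hc).1], by simp [hc], fun y hy => by
    simp only [Finset.mem_filter] at hy; exact ⟨(hP.2.2 y hy.1).1, hy.2⟩⟩

lemma filter_ge (hP : IsPartition t s P) (hc : c ∈ P) : IsPartition c s (P.filter (c ≤ ·)) :=
  ⟨by simp [hc], by simp [hP.2.1, (hP.2.2 c hc).2], fun y hy => by
    simp only [Finset.mem_filter] at hy; exact ⟨hy.2, (hP.2.2 y hy.1).2⟩⟩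

end IsPartition

lemma isPartition_image_univ {m : ℕ} {σ : Fin (m + 1) → ℝ} {t s : ℝ} (hσ : StrictMono σ)
    (h₀ : σ 0 = t) (hₘ : σ (Fin.last m) = s) : IsPartition t s (Finset.univ.image σ) :=
  ⟨by simp [← h₀], by simp [← hₘ], by
    simpa [← h₀, ← hₘ] using fun i => ⟨hσ.monotone (Fin.zero_le i), hσ.monotone (Fin.le_last i)⟩⟩

lemma IsPartition.exists_strictMono {t s : ℝ} {P : Finset ℝ} (hP : IsPartition t s P) :
    ∃ (m : ℕ) (σ : Fin (m + 1) → ℝ), StrictMono σ ∧ σ 0 = t ∧ σ (Fin.last m) = s ∧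
      Finset.univ.image σ = P := by
  obtain ⟨m, hm⟩ : ∃ m, P.card = m + 1 := Nat.exists_eq_add_one.2 (Finset.card_pos.2 ⟨t, hP.1⟩)
  refine ⟨m, P.orderEmbOfFin hm, (P.orderEmbOfFin hm).strictMono, ?_, ?_,
    P.image_orderEmbOfFin_univ hm⟩
  · rw [← Fin.mk_zero, Finset.orderEmbOfFin_zero hm m.succ_pos]
    exact le_antisymm (P.min'_le t hP.1) (Finset.le_min' _ _ _ fun y hy => (hP.2.2 y hy).1)
  · have := Finset.orderEmbOfFin_last hm m.succ_pos
    simp only [Nat.add_sub_cancel] at this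
    rw [Fin.last, this]
    exact le_antisymm (Finset.max'_le _ _ _ fun y hy => (hP.2.2 y hy).2) (P.le_max' s hP.2.1)

lemma sum_sum_eq_gridSum (f : ℝ → ℝ → ℝ) {m n : ℕ} {σ : Fin (m + 1) → ℝ} {τ : Fin (n + 1) → ℝ}
    (hσ : StrictMono σ) (hτ : StrictMono τ) :
    ∑ i : Fin m, ∑ j : Fin n,
        ENNReal.ofReal |mixedInc f (σ i.castSucc) (σ i.succ) (τ j.castSucc) (τ j.succ)| =
      gridSum f (Finset.univ.image σ) (Finset.univ.image τ) := by
  simp only [gridSum, hσ.finsetSort_image_univ, hτ.finsetSort_image_univ,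
    ← sum_fin_eq_chainSum_ofFn]

lemma var2_eq_iSup_gridSum (f : ℝ → ℝ → ℝ) (t s a x : ℝ) :
    var2 f t s a x = ⨆ (PQ : Finset ℝ × Finset ℝ)
      (_ : IsPartition t s PQ.1 ∧ IsPartition a x PQ.2), gridSum f PQ.1 PQ.2 := by
  refine le_antisymm ?_ (iSup₂_le fun ⟨P, Q⟩ ⟨hP, hQ⟩ => ?_)
  · refine iSup_le fun m => iSup_le fun n => iSup_le fun σ => iSup_le fun τ =>
      iSup_le fun ⟨hσ, hτ, hσ₀, hσₘ, hτ₀, hτₙ⟩ => ?_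
    rw [sum_sum_eq_gridSum f hσ hτ]
    exact le_iSup₂_of_le (Finset.univ.image σ, Finset.univ.image τ)
      ⟨isPartition_image_univ hσ hσ₀ hσₘ, isPartition_image_univ hτ hτ₀ hτₙ⟩ le_rfl
  · obtain ⟨m, σ, hσ, hσ₀, hσₘ, rfl⟩ := hP.exists_strictMono
    obtain ⟨n, τ, hτ, hτ₀, hτₙ, rfl⟩ := hQ.exists_strictMono
    rw [← sum_sum_eq_gridSum f hσ hτ]
    exact le_iSup_of_le m <| le_iSup_of_le n <| le_iSup_of_le σ <| le_iSup_of_le τ <|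
      le_iSup_of_le ⟨hσ, hτ, hσ₀, hσₘ, hτ₀, hτₙ⟩ le_rfl

lemma gridSum_le_var2 (f : ℝ → ℝ → ℝ) {t s a x : ℝ} {P Q : Finset ℝ} (hP : IsPartition t s P)
    (hQ : IsPartition a x Q) : gridSum f P Q ≤ var2 f t s a x := by
  rw [var2_eq_iSup_gridSum]
  exact le_iSup₂_of_le (P, Q) ⟨hP, hQ⟩ le_rfl

lemma var2_eq_zero_of_lt {f : ℝ → ℝ → ℝ} {t s a x : ℝ} (h : s < t ∨ x < a) :
    var2 f t s a x = 0 := by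
  rw [var2_eq_iSup_gridSum, ENNReal.iSup_eq_zero]
  exact fun PQ => iSup_eq_bot.2 fun hPQ => absurd h (by simp [hPQ.1.le, hPQ.2.le])

lemma var2_flip (f : ℝ → ℝ → ℝ) (t s a x : ℝ) :
    var2 (fun y r => f r y) a x t s = var2 f t s a x := by
  simp only [var2_eq_iSup_gridSum, gridSum_flip]
  refine le_antisymm (iSup₂_le fun QP h => ?_) (iSup₂_le fun PQ h => ?_)
  · exact le_iSup₂_of_le (QP.2, QP.1) h.symm le_rfl
  · exact le_iSup₂_of_le (PQ.2, PQ.1) h.symm le_rfl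

lemma var2_add_var2_fst (f : ℝ → ℝ → ℝ) {t c s : ℝ} (a x : ℝ) (htc : t ≤ c) (hcs : c ≤ s) :
    var2 f t c a x + var2 f c s a x = var2 f t s a x := by
  rcases lt_or_ge x a with hxa | hax
  · simp [var2_eq_zero_of_lt (Or.inr hxa)]
  refine le_antisymm ?_ ?_
  · rw [var2_eq_iSup_gridSum, var2_eq_iSup_gridSum]
    refine ENNReal.biSup_add_biSup_le' ⟨({t, c}, {a, x}), .pair htc, .pair hax⟩
      ⟨({c, s}, {a, x}), .pair hcs, .pair hax⟩ fun PQ₁ ⟨hP₁, hQ₁⟩ PQ₂ ⟨hP₂, hQ₂⟩ => ?_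
    set R := PQ₁.1 ∪ PQ₂.1
    set Q := PQ₁.2 ∪ PQ₂.2
    have hR : IsPartition t s R := hP₁.union hP₂ htc hcs
    calc gridSum f PQ₁.1 PQ₁.2 + gridSum f PQ₂.1 PQ₂.2
        ≤ gridSum f (R.filter (· ≤ c)) Q + gridSum f (R.filter (c ≤ ·)) Q := by
          refine add_le_add (gridSum_mono f (fun y hy => ?_) Finset.subset_union_left)
            (gridSum_mono f (fun y hy => ?_) Finset.subset_union_right)
          · simp [R, hy, (hP₁.2.2 y hy).2]
          · simp [R, hy, (hP₂.2.2 y hy).1]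
      _ = gridSum f R Q := (gridSum_eq_add_filter f Q (by simp [R, hP₁.2.1])).symm
      _ ≤ var2 f t s a x := gridSum_le_var2 f hR (hQ₁.union hQ₂ le_rfl le_rfl)
  · rw [var2_eq_iSup_gridSum]
    refine iSup₂_le fun PQ ⟨hP, hQ⟩ => ?_
    have hP' := hP.insert htc hcs
    calc gridSum f PQ.1 PQ.2 ≤ gridSum f (insert c PQ.1) PQ.2 :=
          gridSum_mono f (Finset.subset_insert _ _) le_rfl
      _ = _ := gridSum_eq_add_filter f _ (Finset.mem_insert_self c _)
      _ ≤ _ := add_le_add (gridSum_le_var2 f (hP'.filter_le (Finset.mem_insert_self c _)) hQ)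
          (gridSum_le_var2 f (hP'.filter_ge (Finset.mem_insert_self c _)) hQ)

lemma var2_add_var2_snd (f : ℝ → ℝ → ℝ) (t s : ℝ) {a c x : ℝ} (hac : a ≤ c) (hcx : c ≤ x) :
    var2 f t s a c + var2 f t s c x = var2 f t s a x := by
  simpa only [var2_flip] using var2_add_var2_fst (fun y r => f r y) t s hac hcx

lemma var2_mono (f : ℝ → ℝ → ℝ) (t a : ℝ) {s₁ s₂ x₁ x₂ : ℝ} (hs : s₁ ≤ s₂) (hx : x₁ ≤ x₂) :
    var2 f t s₁ a x₁ ≤ var2 f t s₂ a x₂ := by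
  by_cases h : t ≤ s₁ ∧ a ≤ x₁
  · calc var2 f t s₁ a x₁ ≤ var2 f t s₂ a x₁ :=
          var2_add_var2_fst f a x₁ h.1 hs ▸ le_self_add
      _ ≤ var2 f t s₂ a x₂ := var2_add_var2_snd f t s₂ h.2 hx ▸ le_self_add
  · rw [var2_eq_zero_of_lt (by contrapose! h; exact h)]
    exact zero_le

lemma ofReal_abs_mixedInc_le_var2 (f : ℝ → ℝ → ℝ) {s₁ s₂ x₁ x₂ : ℝ} (hs : s₁ ≤ s₂)
    (hx : x₁ ≤ x₂) : ENNReal.ofReal |mixedInc f s₁ s₂ x₁ x₂| ≤ var2 f s₁ s₂ x₁ x₂ := by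
  rcases hs.eq_or_lt with rfl | hs
  · simp
  rcases hx.eq_or_lt with rfl | hx
  · simp
  rw [← gridSum_pair f hs hx]
  exact gridSum_le_var2 f (.pair hs.le) (.pair hx.le)

lemma abs_mixedInc_le_mixedInc_toReal_var2 {f : ℝ → ℝ → ℝ} {t a s₁ s₂ x₁ x₂ : ℝ}
    (hfin : var2 f t s₂ a x₂ ≠ ⊤) (ht : t ≤ s₁) (hs : s₁ ≤ s₂) (ha : a ≤ x₁) (hx : x₁ ≤ x₂) :
    |mixedInc f s₁ s₂ x₁ x₂| ≤ mixedInc (fun s x => (var2 f t s a x).toReal) s₁ s₂ x₁ x₂ := by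
  set R := var2 f s₁ s₂ x₁ x₂
  set A := var2 f s₁ s₂ a x₁
  have h₂₂ : var2 f t s₂ a x₂ = var2 f t s₁ a x₂ + A + R := by
    rw [add_assoc, var2_add_var2_snd f s₁ s₂ ha hx, var2_add_var2_fst f a x₂ ht hs]
  have h₂₁ : var2 f t s₂ a x₁ = var2 f t s₁ a x₁ + A := (var2_add_var2_fst f a x₁ ht hs).symm
  have h₁₁ : var2 f t s₁ a x₁ ≠ ⊤ := ne_top_of_le_ne_top hfin (var2_mono f t a hs hx)
  rw [h₂₂, ENNReal.add_ne_top, ENNReal.add_ne_top] at hfin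
  obtain ⟨⟨h₁₂, hA⟩, hR⟩ := hfin
  have hmixed : mixedInc (fun s x => (var2 f t s a x).toReal) s₁ s₂ x₁ x₂ = R.toReal := by
    simp only [mixedInc]
    rw [h₂₂, h₂₁, ENNReal.toReal_add (ENNReal.add_ne_top.2 ⟨h₁₂, hA⟩) hR,
      ENNReal.toReal_add h₁₂ hA, ENNReal.toReal_add h₁₁ hA]
    ring
  rw [hmixed, ← ENNReal.ofReal_le_iff_le_toReal hR]
  exact ofReal_abs_mixedInc_le_var2 f hs hx

namespace LeftCont2At

variable {f g : ℝ → ℝ → ℝ} {s x : ℝ}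

lemma add (hf : LeftCont2At f s x) (hg : LeftCont2At g s x) :
    LeftCont2At (fun s x => f s x + g s x) s x := fun u v hu hv hus hvx hu' hv' =>
  (hf u v hu hv hus hvx hu' hv').add (hg u v hu hv hus hvx hu' hv')

lemma sub (hf : LeftCont2At f s x) (hg : LeftCont2At g s x) :
    LeftCont2At (fun s x => f s x - g s x) s x := fun u v hu hv hus hvx hu' hv' =>
  (hf u v hu hv hus hvx hu' hv').sub (hg u v hu hv hus hvx hu' hv')

lemma div_const (hf : LeftCont2At f s x) (c : ℝ) : LeftCont2At (fun s x => f s x / c) s x :=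
  fun u v hu hv hus hvx hu' hv' => (hf u v hu hv hus hvx hu' hv').div_const c

end LeftCont2At

noncomputable def leftLim2 (g : ℝ → ℝ → ℝ) (s x : ℝ) : ℝ :=
  sSup (Function.uncurry g '' Iio s ×ˢ Iio x)

section LeftLim2

variable {g : ℝ → ℝ → ℝ} {s x : ℝ}

lemma le_leftLim2 (hg : Monotone (Function.uncurry g)) {s' x' : ℝ} (hs : s' < s) (hx : x' < x) :
    g s' x' ≤ leftLim2 g s x := by
  refine le_csSup ⟨g s x, ?_⟩ ⟨(s', x'), ⟨hs, hx⟩, rfl⟩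
  rintro _ ⟨⟨p, q⟩, ⟨hp, hq⟩, rfl⟩
  exact hg (Prod.mk_le_mk.2 ⟨le_of_lt hp, le_of_lt hq⟩)

lemma leftLim2_le {b : ℝ} (h : ∀ s' < s, ∀ x' < x, g s' x' ≤ b) : leftLim2 g s x ≤ b := by
  refine csSup_le ((nonempty_Iio.prod nonempty_Iio).image _) ?_
  rintro _ ⟨⟨p, q⟩, ⟨hp, hq⟩, rfl⟩
  exact h p hp q hq

lemma monotone_leftLim2 (hg : Monotone (Function.uncurry g)) :
    Monotone (Function.uncurry (leftLim2 g)) := fun _ _ h =>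
  leftLim2_le fun _ hs' _ hx' => le_leftLim2 hg (hs'.trans_le h.1) (hx'.trans_le h.2)

lemma tendsto_leftLim2 (hg : Monotone (Function.uncurry g)) {u v : ℕ → ℝ} (hu : Monotone u)
    (hv : Monotone v) (hus : ∀ k, u k < s) (hvx : ∀ k, v k < x)
    (hu' : Tendsto u atTop (𝓝 s)) (hv' : Tendsto v atTop (𝓝 x)) :
    Tendsto (fun k => g (u k) (v k)) atTop (𝓝 (leftLim2 g s x)) := by
  refine tendsto_atTop_isLUB (fun k l hkl => hg (Prod.mk_le_mk.2 ⟨hu hkl, hv hkl⟩))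
    ⟨?_, fun b hb => leftLim2_le fun s' hs' x' hx' => ?_⟩
  · rintro _ ⟨k, rfl⟩
    exact le_leftLim2 hg (hus k) (hvx k)
  · obtain ⟨k, hk₁, hk₂⟩ :=
      ((hu'.eventually (lt_mem_nhds hs')).and (hv'.eventually (lt_mem_nhds hx'))).exists
    exact (hg (Prod.mk_le_mk.2 ⟨hk₁.le, hk₂.le⟩)).trans (hb ⟨k, rfl⟩)

lemma leftCont2At_leftLim2 (hg : Monotone (Function.uncurry g)) (s x : ℝ) :
    LeftCont2At (leftLim2 g) s x := by
  intro u v hu hv hus hvx hu' hv'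
  refine tendsto_atTop_isLUB
    (fun k l hkl => monotone_leftLim2 hg (Prod.mk_le_mk.2 ⟨hu hkl, hv hkl⟩))
    ⟨?_, fun b hb => leftLim2_le fun s' hs' x' hx' => ?_⟩
  · rintro _ ⟨k, rfl⟩
    exact monotone_leftLim2 hg (Prod.mk_le_mk.2 ⟨hus k, hvx k⟩)
  · obtain ⟨k, hk₁, hk₂⟩ :=
      ((hu'.eventually (lt_mem_nhds hs')).and (hv'.eventually (lt_mem_nhds hx'))).exists
    exact (le_leftLim2 hg hk₁ hk₂).trans (hb ⟨k, rfl⟩)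

end LeftLim2

lemma abs_mixedInc_le_mixedInc_leftLim2 {g h : ℝ → ℝ → ℝ} {t a : ℝ}
    (hg : Monotone (Function.uncurry g))
    (hdom : ∀ s₁ s₂ x₁ x₂, t ≤ s₁ → s₁ ≤ s₂ → a ≤ x₁ → x₁ ≤ x₂ →
      |mixedInc h s₁ s₂ x₁ x₂| ≤ mixedInc g s₁ s₂ x₁ x₂)
    (hh : ∀ s x, t ≤ s → a ≤ x → LeftCont2At h s x)
    {s₁ s₂ x₁ x₂ : ℝ} (ht : t < s₁) (hs : s₁ ≤ s₂) (ha : a < x₁) (hx : x₁ ≤ x₂) :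
    |mixedInc h s₁ s₂ x₁ x₂| ≤ mixedInc (leftLim2 g) s₁ s₂ x₁ x₂ := by
  rcases hs.eq_or_lt with rfl | hs
  · simp
  rcases hx.eq_or_lt with rfl | hx
  · simp
  obtain ⟨u₁, hu₁, hu₁I, hu₁'⟩ := exists_seq_strictMono_tendsto' ht
  obtain ⟨u₂, hu₂, hu₂I, hu₂'⟩ := exists_seq_strictMono_tendsto' hs
  obtain ⟨v₁, hv₁, hv₁I, hv₁'⟩ := exists_seq_strictMono_tendsto' ha
  obtain ⟨v₂, hv₂, hv₂I, hv₂'⟩ := exists_seq_strictMono_tendsto' hx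
  have mixedInc_lim : ∀ {G L : ℝ → ℝ → ℝ}, (∀ {u v : ℕ → ℝ} {c d s x : ℝ}, t ≤ s → a ≤ x →
      StrictMono u → StrictMono v → (∀ k, u k ∈ Ioo c s) → (∀ k, v k ∈ Ioo d x) →
      Tendsto u atTop (𝓝 s) → Tendsto v atTop (𝓝 x) →
      Tendsto (fun k => G (u k) (v k)) atTop (𝓝 (L s x))) →
      Tendsto (fun k => mixedInc G (u₁ k) (u₂ k) (v₁ k) (v₂ k)) atTop
        (𝓝 (mixedInc L s₁ s₂ x₁ x₂)) := fun lim =>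
    (((lim (ht.trans hs).le (ha.trans hx).le hu₂ hv₂ hu₂I hv₂I hu₂' hv₂').sub
      (lim (ht.trans hs).le ha.le hu₂ hv₁ hu₂I hv₁I hu₂' hv₁')).sub
      (lim ht.le (ha.trans hx).le hu₁ hv₂ hu₁I hv₂I hu₁' hv₂')).add
      (lim ht.le ha.le hu₁ hv₁ hu₁I hv₁I hu₁' hv₁')
  have lim_h := mixedInc_lim fun hts hax hu hv huI hvI hu' hv' =>
    hh _ _ hts hax _ _ hu.monotone hv.monotone (fun k => (huI k).2.le) (fun k => (hvI k).2.le)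
      hu' hv'
  have lim_g := mixedInc_lim fun _ _ hu hv huI hvI hu' hv' =>
    tendsto_leftLim2 hg hu.monotone hv.monotone (fun k => (huI k).2) (fun k => (hvI k).2) hu' hv'
  refine le_of_tendsto_of_tendsto' lim_h.abs lim_g fun k => hdom _ _ _ _ (hu₁I k).1.le ?_
    (hv₁I k).1.le ?_
  · exact ((hu₁I k).2.trans (hu₂I k).1).le
  · exact ((hv₁I k).2.trans (hv₂I k).1).le

/-- Left-continuous Jordan decomposition (Proposition 2 of the paper): taking left limits of
`f̃₁ = (V_f + f)/2` and `f̃₂ = (V_f − f)/2` yields two-dimensionally monotonically increasing,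
left continuous functions `f₁, f₂` with `f = f₁ − f₂` on the interior of the quarter space. -/
theorem jordan_decomposition_left_continuous (f : ℝ → ℝ → ℝ) (t a : ℝ)
    (hbv : ∀ s x, t ≤ s → a ≤ x → var2 f t s a x ≠ ⊤)
    (hlc : ∀ s x, t ≤ s → a ≤ x → LeftCont2At f s x) :
    ∃ f₁ f₂ : ℝ → ℝ → ℝ,
      -- f₁, f₂ are the left limits of f̃₁, f̃₂ along monotone approach from strictly below
      (∀ s x, t < s → a < x →
        ∀ u v : ℕ → ℝ, Monotone u → Monotone v →
          (∀ k, t ≤ u k ∧ u k < s) → (∀ k, a ≤ v k ∧ v k < x) →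
          Tendsto u atTop (𝓝 s) → Tendsto v atTop (𝓝 x) →
          Tendsto (fun k =>
              ((var2 f t (u k) a (v k)).toReal + f (u k) (v k)) / 2) atTop (𝓝 (f₁ s x)) ∧
          Tendsto (fun k =>
              ((var2 f t (u k) a (v k)).toReal - f (u k) (v k)) / 2) atTop (𝓝 (f₂ s x))) ∧
      -- f₁, f₂ are monotonically increasing in the two-dimensional sense
      (∀ s₁ s₂ x₁ x₂ : ℝ, t < s₁ → s₁ ≤ s₂ → a < x₁ → x₁ ≤ x₂ →
          0 ≤ mixedInc f₁ s₁ s₂ x₁ x₂ ∧ 0 ≤ mixedInc f₂ s₁ s₂ x₁ x₂) ∧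
      -- f₁, f₂ are left continuous
      (∀ s x, t < s → a < x → LeftCont2At f₁ s x ∧ LeftCont2At f₂ s x) ∧
      -- decomposition on the interior of the quarter space
      (∀ s x, t < s → a < x → f s x = f₁ s x - f₂ s x) := by
  set V : ℝ → ℝ → ℝ := fun s x => (var2 f t s a x).toReal
  have hfin : ∀ s x, var2 f t s a x ≠ ⊤ := fun s x => by
    by_cases h : t ≤ s ∧ a ≤ x
    · exact hbv s x h.1 h.2
    · rw [var2_eq_zero_of_lt (by contrapose! h; exact h)]
      exact ENNReal.zero_ne_top
  have hV : Monotone (Function.uncurry V) := fun p q hpq =>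
    ENNReal.toReal_mono (hfin _ _) (var2_mono f t a hpq.1 hpq.2)
  refine ⟨fun s x => (leftLim2 V s x + f s x) / 2, fun s x => (leftLim2 V s x - f s x) / 2,
    fun s x hts hax u v hu hv hus hvx hu' hv' => ?_, fun s₁ s₂ x₁ x₂ ht hs ha hx => ?_,
    fun s x hts hax => ?_, fun s x _ _ => by ring⟩
  · have hlim := tendsto_leftLim2 hV hu hv (fun k => (hus k).2) (fun k => (hvx k).2) hu' hv'
    have hf := hlc s x hts.le hax.le u v hu hv (fun k => (hus k).2.le) (fun k => (hvx k).2.le)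
      hu' hv'
    exact ⟨(hlim.add hf).div_const 2, (hlim.sub hf).div_const 2⟩
  · have hdom := abs_mixedInc_le_mixedInc_leftLim2 hV
      (fun _ s₂ _ x₂ => abs_mixedInc_le_mixedInc_toReal_var2 (hfin s₂ x₂)) hlc ht hs ha hx
    constructor <;> simp only [mixedInc] at hdom ⊢ <;> linarith [abs_le.1 hdom]
  · exact ⟨(leftCont2At_leftLim2 hV s x).add (hlc s x hts.le hax.le) |>.div_const 2,
      (leftCont2At_leftLim2 hV s x).sub (hlc s x hts.le hax.le) |>.div_const 2⟩
end

section
/- Let F : ℝ → ℝ be left continuous and of bounded variation on [a,b], vanishing outside [a,b], and let g_m(x) = ∫₀² ρ(z) g(x + z/m) dz be mollifications of a bounded cadlag function g : ℝ → ℝ with compact support (ρ a smooth probability density supported in (0,2)). Then ∫ g_m(x) dF(x) → ∫ g(x) dF(x) as m → ∞, where the integrals are Lebesgue–Stieltjes integrals with respect to the signed measure induced by F. -/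
open MeasureTheory Set Filter Topology Real

lemma rightCont_stronglyMeasurable {g : ℝ → ℝ}
    (hgr : ∀ x : ℝ, ContinuousWithinAt g (Set.Ici x) x) : StronglyMeasurable g := by
  have key : ∀ x : ℝ, Tendsto (fun n : ℕ => g ((⌈(n+1 : ℝ) * x⌉ : ℝ) / (n+1)))
      atTop (𝓝 (g x)) := by
    intro x
    have hx : Tendsto (fun n : ℕ => (⌈(n+1 : ℝ) * x⌉ : ℝ) / (n+1)) atTop (𝓝[Set.Ici x] x) := by
      apply tendsto_nhdsWithin_of_tendsto_nhds_of_eventually_within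
      · have hsq : ∀ n : ℕ, x ≤ (⌈(n+1 : ℝ) * x⌉ : ℝ) / (n+1) ∧
            (⌈(n+1 : ℝ) * x⌉ : ℝ) / (n+1) ≤ x + 1/(n+1) := by
          intro n
          have hn : (0:ℝ) < n + 1 := by positivity
          constructor
          · rw [le_div_iff₀ hn]
            calc x * (n+1) = (n+1) * x := mul_comm _ _
            _ ≤ ⌈(n+1 : ℝ) * x⌉ := Int.le_ceil _
          · rw [div_le_iff₀ hn]
            have := Int.ceil_lt_add_one ((n+1 : ℝ) * x)
            calc (⌈(n+1 : ℝ) * x⌉ : ℝ) ≤ (n+1) * x + 1 := le_of_lt this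
            _ = (x + 1/(n+1)) * (n+1) := by field_simp
        have h1 : Tendsto (fun n : ℕ => x + 1/((n:ℝ)+1)) atTop (𝓝 x) := by
          simpa using (tendsto_const_nhds (x := x)).add tendsto_one_div_add_atTop_nhds_zero_nat
        exact tendsto_of_tendsto_of_tendsto_of_le_of_le tendsto_const_nhds h1
          (fun n => (hsq n).1) (fun n => (hsq n).2)
      · filter_upwards with n
        have hn : (0:ℝ) < n + 1 := by positivity
        rw [Set.mem_Ici, le_div_iff₀ hn]
        calc x * (n+1) = (n+1) * x := mul_comm _ _
        _ ≤ ⌈(n+1 : ℝ) * x⌉ := Int.le_ceil _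
    exact (hgr x).tendsto.comp hx
  apply stronglyMeasurable_of_tendsto (f := fun n : ℕ => fun x : ℝ =>
    g ((⌈(n+1 : ℝ) * x⌉ : ℝ) / (n+1))) atTop
  · intro n
    have h1 : Measurable fun x : ℝ => (⌈(n+1 : ℝ) * x⌉ : ℤ) :=
      Int.measurable_ceil.comp (measurable_const.mul measurable_id)
    have h2 : Measurable fun k : ℤ => g ((k : ℝ) / (n+1)) := measurable_from_top
    exact (h2.comp h1).stronglyMeasurable
  · rw [tendsto_pi_nhds]; exact key


/-- Convergence of Stieltjes integrals of mollifications of a cadlag function: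
if `g` is bounded cadlag with compact support and `g_m(x) = ∫₀² ρ(z) g(x + z/m) dz`,
then `∫ g_m dF → ∫ g dF` for the signed Lebesgue–Stieltjes measure of a left continuous
function `F` of bounded variation on `[a,b]` vanishing outside `[a,b]`. -/
theorem stieltjes_integral_mollification (F g : ℝ → ℝ) (a b : ℝ) (hab : a ≤ b)
    (ρ : ℝ → ℝ) (hρs : ContDiff ℝ (⊤ : ℕ∞) ρ) (hρpos : ∀ x, 0 ≤ ρ x)
    (hρsupp : ∀ x, x ∉ Set.Ioo (0:ℝ) 2 → ρ x = 0) (hρint : ∫ x, ρ x = 1)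
    -- F is left continuous, of bounded variation on [a,b], vanishing outside [a,b]
    (hFlc : ∀ x : ℝ, ∀ u : ℕ → ℝ, Monotone u → (∀ k, u k ≤ x) →
      Tendsto u atTop (𝓝 x) → Tendsto (fun k => F (u k)) atTop (𝓝 (F x)))
    (hFbv : var1 F a b ≠ ⊤) (hFout : ∀ x, x ∉ Set.Icc a b → F x = 0)
    -- g is bounded, cadlag, with compact support
    (hgbd : ∃ C, ∀ x, |g x| ≤ C)
    (hgr : ∀ x : ℝ, ContinuousWithinAt g (Set.Ici x) x)
    (hgl : ∀ x : ℝ, ∃ l : ℝ, Tendsto g (𝓝[<] x) (𝓝 l))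
    (hgsupp : HasCompactSupport g)
    -- μp − μm is the signed Lebesgue–Stieltjes measure induced by F
    (μp μm : Measure ℝ) [IsFiniteMeasure μp] [IsFiniteMeasure μm]
    (hμ : ∀ x₁ x₂ : ℝ, x₁ ≤ x₂ →
      (μp (Set.Ico x₁ x₂)).toReal - (μm (Set.Ico x₁ x₂)).toReal = F x₂ - F x₁) :
    let gm : ℕ → ℝ → ℝ := fun m x => ∫ z in Set.Icc (0:ℝ) 2, ρ z * g (x + z / m)
    Tendsto (fun m => (∫ x, gm m x ∂μp) - ∫ x, gm m x ∂μm) atTop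
      (𝓝 ((∫ x, g x ∂μp) - ∫ x, g x ∂μm)) := by
  intro gm
  obtain ⟨C, hC⟩ := hgbd
  have hC0 : 0 ≤ C := (abs_nonneg _).trans (hC 0)
  have hgsm : StronglyMeasurable g := rightCont_stronglyMeasurable hgr
  -- ρ is integrable on Icc 0 2 and integrates to 1 there
  have hρcont : Continuous ρ := hρs.continuous
  have hρi : IntegrableOn ρ (Set.Icc (0:ℝ) 2) := hρcont.integrableOn_Icc
  have hρint2 : ∫ z in Set.Icc (0:ℝ) 2, ρ z = 1 := by
    rw [setIntegral_eq_integral_of_forall_compl_eq_zero (fun x hx => hρsupp x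
      (fun hx' => hx (Set.Ioo_subset_Icc_self hx')))]
    exact hρint
  -- strong measurability of each gm m
  have hgm_sm : ∀ m : ℕ, StronglyMeasurable (gm m) := by
    intro m
    have hf : StronglyMeasurable fun p : ℝ × ℝ => ρ p.2 * g (p.1 + p.2 / m) := by
      refine (hρcont.comp continuous_snd).stronglyMeasurable.mul ?_
      exact hgsm.comp_measurable ((measurable_fst.add (measurable_snd.div_const _)))
    exact hf.integral_prod_right'
  -- integrand measurability for the inner integrals
  have hinner_sm : ∀ (m : ℕ) (x : ℝ),
      AEStronglyMeasurable (fun z => ρ z * g (x + z / m))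
        (volume.restrict (Set.Icc (0:ℝ) 2)) := by
    intro m x
    refine (hρcont.stronglyMeasurable.mul (hgsm.comp_measurable
      (measurable_const.add (measurable_id.div_const _)))).aestronglyMeasurable
  -- the dominating bound for the inner integrals
  have hbnd : Integrable (fun z => ρ z * C) (volume.restrict (Set.Icc (0:ℝ) 2)) :=
    hρi.mul_const C
  -- uniform bound |gm m x| ≤ C
  have hgm_bd : ∀ (m : ℕ) (x : ℝ), ‖gm m x‖ ≤ C := by
    intro m x
    have h1 : ‖∫ z in Set.Icc (0:ℝ) 2, ρ z * g (x + z / m)‖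
        ≤ ∫ z in Set.Icc (0:ℝ) 2, ρ z * C := by
      refine norm_integral_le_of_norm_le hbnd ?_
      filter_upwards with z
      rw [norm_mul, Real.norm_eq_abs, Real.norm_eq_abs, abs_of_nonneg (hρpos z)]
      exact mul_le_mul_of_nonneg_left (hC _) (hρpos z)
    calc ‖gm m x‖ ≤ ∫ z in Set.Icc (0:ℝ) 2, ρ z * C := h1
      _ = (∫ z in Set.Icc (0:ℝ) 2, ρ z) * C := by rw [integral_mul_const]
      _ = C := by rw [hρint2, one_mul]
  -- pointwise convergence gm m x → g x for every x
  have hptwise : ∀ x : ℝ, Tendsto (fun m : ℕ => gm m x) atTop (𝓝 (g x)) := by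
    intro x
    have hgoal : Tendsto (fun m : ℕ => ∫ z in Set.Icc (0:ℝ) 2, ρ z * g (x + z / m))
        atTop (𝓝 (∫ z in Set.Icc (0:ℝ) 2, ρ z * g x)) := by
      refine tendsto_integral_of_dominated_convergence (fun z => ρ z * C)
        (fun m => hinner_sm m x) hbnd ?_ ?_
      · intro m
        filter_upwards with z
        rw [norm_mul, Real.norm_eq_abs, Real.norm_eq_abs, abs_of_nonneg (hρpos z)]
        exact mul_le_mul_of_nonneg_left (hC _) (hρpos z)
      · filter_upwards [ae_restrict_mem measurableSet_Icc] with z hz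
        have hz0 : 0 ≤ z := hz.1
        have hx : Tendsto (fun m : ℕ => x + z / m) atTop (𝓝[Set.Ici x] x) := by
          apply tendsto_nhdsWithin_of_tendsto_nhds_of_eventually_within
          · simpa using tendsto_const_nhds.add (tendsto_const_div_atTop_nhds_zero_nat z)
          · filter_upwards with m
            have : (0:ℝ) ≤ z / m := div_nonneg hz0 (Nat.cast_nonneg m)
            simpa using this
        exact tendsto_const_nhds.mul ((hgr x).tendsto.comp hx)
    have : ∫ z in Set.Icc (0:ℝ) 2, ρ z * g x = g x := by
      rw [integral_mul_const, hρint2, one_mul]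
    rw [this] at hgoal
    exact hgoal
  -- outer dominated convergence for each measure
  have houter : ∀ (μ : Measure ℝ) [IsFiniteMeasure μ],
      Tendsto (fun m => ∫ x, gm m x ∂μ) atTop (𝓝 (∫ x, g x ∂μ)) := by
    intro μ _
    refine tendsto_integral_of_dominated_convergence (fun _ => C)
      (fun m => (hgm_sm m).aestronglyMeasurable) (integrable_const C) ?_ ?_
    · intro m; filter_upwards with x; exact hgm_bd m x
    · filter_upwards with x; exact hptwise x
  exact (houter μp).sub (houter μm)
end

section
/- The function g(t,x) = cos(πx)·sin(πt)·1_{sin(πx)sin(πt) > 0} has locally bounded two-dimensional variation on ℝ²: for every rectangle [t₁,t₂]×[a,b], the supremum over grid partitions of the sums of absolute mixed second-order increments of g is finite. -/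
open MeasureTheory Set Filter Topology Real

open Classical in
noncomputable def Jf (x : ℝ) : ℝ := if ∃ k : ℤ, x = 2*(k:ℝ) then x else (⌊x⌋ : ℝ) + 1

noncomputable def Df (x : ℝ) : ℝ :=
  2*((⌊x/2⌋ : ℤ) : ℝ) + (if 0 ≤ Real.sin (π * x) then 1 - Real.cos (π * x) else 2)

noncomputable def fF (x : ℝ) : ℝ := if 0 < Real.sin (π * x) then Real.cos (π * x) else 0

lemma sinpi_pos {y : ℝ} (h0 : 0 < y) (h1 : y < 1) : 0 < Real.sin (π * y) :=
  Real.sin_pos_of_pos_of_lt_pi (by positivity) (by nlinarith [Real.pi_pos])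

lemma sinpi_nonneg {y : ℝ} (h0 : 0 ≤ y) (h1 : y ≤ 1) : 0 ≤ Real.sin (π * y) :=
  Real.sin_nonneg_of_nonneg_of_le_pi (by positivity) (by nlinarith [Real.pi_pos])

lemma sinpi_neg {y : ℝ} (h1 : 1 < y) (h2 : y < 2) : Real.sin (π * y) < 0 := by
  have h : Real.sin (π * y) = -Real.sin (π * (y - 1)) := by
    rw [show π * y = π * (y - 1) + π by ring, Real.sin_add_pi]
  rw [h, neg_lt, neg_zero]
  exact sinpi_pos (by linarith) (by linarith)

lemma le_one_of_sinpi_nonneg {y : ℝ} (h2 : y < 2) (hs : 0 ≤ Real.sin (π * y)) : y ≤ 1 := by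
  by_contra h
  exact absurd hs (not_le.2 (sinpi_neg (not_le.1 h) h2))

lemma one_lt_of_sinpi_neg {y : ℝ} (h0 : 0 ≤ y) (hs : Real.sin (π * y) < 0) : 1 < y := by
  by_contra h
  exact absurd (sinpi_nonneg h0 (not_lt.1 h)) (not_le.2 hs)

lemma rep (x : ℝ) : ∃ (k : ℤ) (y : ℝ), 0 ≤ y ∧ y < 2 ∧ x = 2*(k:ℝ) + y ∧
    Real.sin (π * x) = Real.sin (π * y) ∧ Real.cos (π * x) = Real.cos (π * y) ∧
    ⌊x/2⌋ = k := by
  have h1 : ((⌊x/2⌋ : ℤ) : ℝ) ≤ x/2 := Int.floor_le _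
  have h2 : x/2 < (⌊x/2⌋ : ℤ) + 1 := Int.lt_floor_add_one _
  refine ⟨⌊x/2⌋, x - 2*((⌊x/2⌋ : ℤ) : ℝ), by linarith, by linarith, by ring, ?_, ?_, rfl⟩
  · rw [show π * x = π * (x - 2*((⌊x/2⌋ : ℤ) : ℝ)) + (⌊x/2⌋ : ℤ) * (2 * π) by ring,
      Real.sin_add_int_mul_two_pi]
  · rw [show π * x = π * (x - 2*((⌊x/2⌋ : ℤ) : ℝ)) + (⌊x/2⌋ : ℤ) * (2 * π) by ring,
      Real.cos_add_int_mul_two_pi]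

lemma not_even_rep {k m : ℤ} {y : ℝ} (h0 : 0 < y) (h2 : y < 2)
    (h : 2*(k:ℝ) + y = 2*(m:ℝ)) : False := by
  have h1 : y = 2*((m - k : ℤ) : ℝ) := by push_cast; linarith
  have h3 : (0:ℝ) < ((m - k : ℤ) : ℝ) := by linarith
  have h4 : ((m - k : ℤ) : ℝ) < 1 := by linarith
  have h5 : (0:ℤ) < m - k := by exact_mod_cast h3
  have h6 : (m - k : ℤ) < 1 := by exact_mod_cast h4
  omega

lemma fF_eq (x : ℝ) : fF x = Jf x - Df x := by
  obtain ⟨k, y, hy0, hy2, hx, hsin, hcos, hfl2⟩ := rep x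
  subst hx
  rcases lt_trichotomy y 1 with hy1 | hy1 | hy1
  · rcases eq_or_lt_of_le hy0 with hy0' | hy0'
    · -- y = 0
      subst hy0'
      have hs : Real.sin (π * (2*(k:ℝ) + 0)) = 0 := by rw [hsin]; simp
      have hc : Real.cos (π * (2*(k:ℝ) + 0)) = 1 := by rw [hcos]; simp
      have hxe : ∃ m : ℤ, 2*(k:ℝ) + 0 = 2*(m:ℝ) := ⟨k, by ring⟩
      simp only [fF, Jf, Df, hs, hc, hfl2, if_pos hxe, lt_irrefl, if_neg (lt_irrefl (0:ℝ)),
        if_pos (le_refl (0:ℝ))]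
      norm_num
    · -- 0 < y < 1
      have hs : 0 < Real.sin (π * (2*(k:ℝ) + y)) := by rw [hsin]; exact sinpi_pos hy0' hy1
      have hxe : ¬ ∃ m : ℤ, 2*(k:ℝ) + y = 2*(m:ℝ) := by
        rintro ⟨m, hm⟩; exact not_even_rep hy0' hy2 hm
      have hfl : ⌊2*(k:ℝ) + y⌋ = 2*k := by
        rw [Int.floor_eq_iff]; push_cast; constructor <;> linarith
      simp only [fF, Jf, Df, if_pos hs, if_neg hxe, hfl, hfl2, if_pos hs.le]
      push_cast; ring
  · -- y = 1
    subst hy1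
    have hs : Real.sin (π * (2*(k:ℝ) + 1)) = 0 := by rw [hsin]; simp
    have hc : Real.cos (π * (2*(k:ℝ) + 1)) = -1 := by rw [hcos]; simp
    have hxe : ¬ ∃ m : ℤ, 2*(k:ℝ) + 1 = 2*(m:ℝ) := by
      rintro ⟨m, hm⟩; exact not_even_rep one_pos (by norm_num) hm
    have hfl : ⌊2*(k:ℝ) + 1⌋ = 2*k + 1 := by
      rw [Int.floor_eq_iff]; push_cast; constructor <;> linarith
    simp only [fF, Jf, Df, hs, hc, hxe, if_neg (lt_irrefl (0:ℝ)), if_neg hxe, hfl, hfl2,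
      if_pos (le_refl (0:ℝ))]
    push_cast; ring
  · -- 1 < y < 2
    have hs : Real.sin (π * (2*(k:ℝ) + y)) < 0 := by rw [hsin]; exact sinpi_neg hy1 hy2
    have hxe : ¬ ∃ m : ℤ, 2*(k:ℝ) + y = 2*(m:ℝ) := by
      rintro ⟨m, hm⟩; exact not_even_rep (by linarith) hy2 hm
    have hfl : ⌊2*(k:ℝ) + y⌋ = 2*k + 1 := by
      rw [Int.floor_eq_iff]; push_cast; constructor <;> linarith
    simp only [fF, Jf, Df, if_neg (not_lt.2 hs.le), if_neg hxe, hfl, hfl2,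
      if_neg (not_le.2 hs)]
    push_cast; ring

lemma Jf_le (x : ℝ) : Jf x ≤ (⌊x⌋ : ℝ) + 1 := by
  unfold Jf; split
  · linarith [Int.lt_floor_add_one x]
  · exact le_rfl

lemma le_Jf (x : ℝ) : x ≤ Jf x := by
  unfold Jf; split
  · exact le_rfl
  · linarith [Int.lt_floor_add_one x]

lemma Jf_mono : Monotone Jf := by
  intro x y hxy
  rcases lt_or_ge (⌊x⌋) (⌊y⌋) with h | h
  · have h1 : (⌊x⌋ : ℝ) + 1 ≤ (⌊y⌋ : ℝ) := by exact_mod_cast Int.add_one_le_of_lt h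
    calc Jf x ≤ (⌊x⌋ : ℝ) + 1 := Jf_le x
      _ ≤ (⌊y⌋ : ℝ) := h1
      _ ≤ y := Int.floor_le y
      _ ≤ Jf y := le_Jf y
  · have heq : ⌊x⌋ = ⌊y⌋ := le_antisymm (Int.floor_mono hxy) h
    by_cases hey : ∃ m : ℤ, y = 2*(m:ℝ)
    · obtain ⟨m, hm⟩ := hey
      have hfy : (⌊y⌋ : ℝ) = y := by
        rw [hm, show (2:ℝ)*(m:ℝ) = ((2*m : ℤ) : ℝ) by push_cast; ring, Int.floor_intCast]
      have hxy' : x = y := by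
        have h1 : (⌊x⌋ : ℝ) ≤ x := Int.floor_le x
        have h2 : (⌊x⌋ : ℝ) = y := by rw [heq]; exact hfy
        linarith
      rw [hxy']
    · have hjy : Jf y = (⌊y⌋ : ℝ) + 1 := if_neg hey
      rw [hjy, ← heq]
      exact Jf_le x

lemma Dterm_nonneg (x : ℝ) : 0 ≤ (if 0 ≤ Real.sin (π * x) then 1 - Real.cos (π * x) else 2) := by
  split
  · linarith [Real.cos_le_one (π * x)]
  · norm_num

lemma Dterm_le_two (x : ℝ) : (if 0 ≤ Real.sin (π * x) then 1 - Real.cos (π * x) else 2) ≤ 2 := by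
  split
  · linarith [Real.neg_one_le_cos (π * x)]
  · exact le_rfl

lemma Dterm_mono {u v : ℝ} (hu0 : 0 ≤ u) (huv : u ≤ v) (hv2 : v < 2) :
    (if 0 ≤ Real.sin (π * u) then 1 - Real.cos (π * u) else 2)
      ≤ (if 0 ≤ Real.sin (π * v) then 1 - Real.cos (π * v) else 2) := by
  by_cases h1 : 0 ≤ Real.sin (π * u) <;> by_cases h2 : 0 ≤ Real.sin (π * v)
  · rw [if_pos h1, if_pos h2]
    have hu1 : u ≤ 1 := le_one_of_sinpi_nonneg (by linarith) h1
    have hv1 : v ≤ 1 := le_one_of_sinpi_nonneg hv2 h2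
    have : Real.cos (π * v) ≤ Real.cos (π * u) :=
      Real.cos_le_cos_of_nonneg_of_le_pi (by positivity)
        (by nlinarith [Real.pi_pos]) (by nlinarith [Real.pi_pos])
    linarith
  · rw [if_pos h1, if_neg h2]
    linarith [Real.neg_one_le_cos (π * u)]
  · exfalso
    have h3 : 1 < u := one_lt_of_sinpi_neg hu0 (not_le.1 h1)
    have h4 : v ≤ 1 := le_one_of_sinpi_nonneg hv2 h2
    linarith
  · rw [if_neg h1, if_neg h2]

lemma Df_mono : Monotone Df := by
  intro x y hxy
  rcases lt_or_ge (⌊x/2⌋) (⌊y/2⌋) with h | h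
  · have h1 : (⌊x/2⌋ : ℝ) + 1 ≤ (⌊y/2⌋ : ℝ) := by exact_mod_cast Int.add_one_le_of_lt h
    unfold Df
    have := Dterm_le_two x
    have := Dterm_nonneg y
    linarith
  · have heq : ⌊x/2⌋ = ⌊y/2⌋ := le_antisymm (Int.floor_mono (by linarith)) h
    unfold Df
    rw [heq]
    have hux : ((⌊y/2⌋ : ℤ) : ℝ) ≤ x/2 := heq ▸ Int.floor_le (x/2)
    have hvy : y/2 < ((⌊y/2⌋ : ℤ) : ℝ) + 1 := Int.lt_floor_add_one (y/2)
    have hsx : Real.sin (π * x) = Real.sin (π * (x - 2*((⌊y/2⌋ : ℤ) : ℝ))) := by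
      rw [show π * x = π * (x - 2*((⌊y/2⌋ : ℤ) : ℝ)) + (⌊y/2⌋ : ℤ) * (2 * π) by push_cast; ring,
        Real.sin_add_int_mul_two_pi]
    have hsy : Real.sin (π * y) = Real.sin (π * (y - 2*((⌊y/2⌋ : ℤ) : ℝ))) := by
      rw [show π * y = π * (y - 2*((⌊y/2⌋ : ℤ) : ℝ)) + (⌊y/2⌋ : ℤ) * (2 * π) by push_cast; ring,
        Real.sin_add_int_mul_two_pi]
    have hcx : Real.cos (π * x) = Real.cos (π * (x - 2*((⌊y/2⌋ : ℤ) : ℝ))) := by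
      rw [show π * x = π * (x - 2*((⌊y/2⌋ : ℤ) : ℝ)) + (⌊y/2⌋ : ℤ) * (2 * π) by push_cast; ring,
        Real.cos_add_int_mul_two_pi]
    have hcy : Real.cos (π * y) = Real.cos (π * (y - 2*((⌊y/2⌋ : ℤ) : ℝ))) := by
      rw [show π * y = π * (y - 2*((⌊y/2⌋ : ℤ) : ℝ)) + (⌊y/2⌋ : ℤ) * (2 * π) by push_cast; ring,
        Real.cos_add_int_mul_two_pi]
    rw [hsx, hsy, hcx, hcy]
    have key := Dterm_mono (u := x - 2*((⌊y/2⌋ : ℤ) : ℝ)) (v := y - 2*((⌊y/2⌋ : ℤ) : ℝ))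
      (by linarith) (by linarith) (by linarith)
    linarith

noncomputable def hF (x : ℝ) : ℝ := if Real.sin (π * x) < 0 then -Real.cos (π * x) else 0

noncomputable def pF (t : ℝ) : ℝ := max (Real.sin (π * t)) 0

noncomputable def qF (t : ℝ) : ℝ := max (-Real.sin (π * t)) 0

lemma fin_telescope {m : ℕ} (φ : Fin (m+1) → ℝ) :
    ∑ j : Fin m, (φ j.succ - φ j.castSucc) = φ (Fin.last m) - φ 0 := by
  set ψ : ℕ → ℝ := fun i => φ ⟨min i m, Nat.lt_succ_of_le (min_le_right _ _)⟩ with hψ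
  have h1 : ∑ j : Fin m, (φ j.succ - φ j.castSucc) = ∑ i ∈ Finset.range m, (ψ (i+1) - ψ i) := by
    rw [← Fin.sum_univ_eq_sum_range (fun i => ψ (i+1) - ψ i) m]
    apply Finset.sum_congr rfl
    intro j _
    have hj1 : min ((j:ℕ)+1) m = (j:ℕ)+1 := Nat.min_eq_left j.2
    have hj2 : min (j:ℕ) m = (j:ℕ) := Nat.min_eq_left (le_of_lt j.2)
    have e1 : φ j.succ = ψ ((j:ℕ)+1) := by
      simp only [hψ]; congr 1; exact Fin.ext (by simp [hj1])
    have e2 : φ j.castSucc = ψ (j:ℕ) := by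
      simp only [hψ]; congr 1; exact Fin.ext (by simp [hj2])
    rw [e1, e2]
  rw [h1, Finset.sum_range_sub ψ m]
  have e3 : ψ m = φ (Fin.last m) := by simp only [hψ]; congr 1; exact Fin.ext (by simp [Fin.last])
  have e4 : ψ 0 = φ 0 := by simp only [hψ]; congr 1
  rw [e3, e4]

lemma mono_sum_eq {m : ℕ} (τ : Fin (m+1) → ℝ) (hτ : Monotone τ) (M : ℝ → ℝ) (hM : Monotone M) :
    ∑ j : Fin m, |M (τ j.succ) - M (τ j.castSucc)| = M (τ (Fin.last m)) - M (τ 0) := by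
  rw [← fin_telescope (fun j => M (τ j))]
  apply Finset.sum_congr rfl
  intro j _
  exact abs_of_nonneg (sub_nonneg.2 (hM (hτ (Fin.castSucc_le_succ j))))

lemma g_decomp (t x : ℝ) :
    Real.cos (π * x) * Real.sin (π * t) *
      (if 0 < Real.sin (π * x) * Real.sin (π * t) then 1 else 0)
    = fF x * pF t + hF x * qF t := by
  unfold fF hF pF qF
  rcases lt_trichotomy (Real.sin (π * x)) 0 with hs | hs | hs <;>
    rcases lt_trichotomy (Real.sin (π * t)) 0 with ht | ht | ht
  · rw [if_pos (mul_pos_of_neg_of_neg hs ht), if_neg (by linarith), if_pos hs,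
      max_eq_right ht.le, max_eq_left (by linarith)]
    ring
  · rw [ht]; simp
  · rw [if_neg (by nlinarith), if_neg (by linarith), if_pos hs,
      max_eq_left ht.le, max_eq_right (by linarith)]
    ring
  · rw [hs]; simp
  · rw [hs]; simp
  · rw [hs]; simp
  · rw [if_neg (by nlinarith), if_pos hs, if_neg (by linarith),
      max_eq_right ht.le, max_eq_left (by linarith)]
    ring
  · rw [ht]; simp
  · rw [if_pos (mul_pos hs ht), if_pos hs, if_neg (by linarith),
      max_eq_left ht.le, max_eq_right (by linarith)]
    ring

lemma hF_eq_fF (x : ℝ) : hF x = fF (x + 1) := by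
  unfold fF hF
  have hs : Real.sin (π * (x+1)) = -Real.sin (π * x) := by
    rw [show π * (x+1) = π * x + π by ring, Real.sin_add_pi]
  have hc : Real.cos (π * (x+1)) = -Real.cos (π * x) := by
    rw [show π * (x+1) = π * x + π by ring, Real.cos_add_pi]
  rw [hs, hc]
  rcases lt_trichotomy (Real.sin (π * x)) 0 with h | h | h
  · rw [if_pos h, if_pos (by linarith)]
  · rw [h]; simp
  · rw [if_neg (by linarith), if_neg (by linarith)]

lemma sin_lip (a b : ℝ) : |Real.sin a - Real.sin b| ≤ |a - b| := by
  rw [Real.sin_sub_sin]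
  have h1 : |Real.sin ((a-b)/2)| ≤ |(a-b)/2| := Real.abs_sin_le_abs
  have h2 : |Real.cos ((a+b)/2)| ≤ 1 := Real.abs_cos_le_one _
  have h3 : |(a-b)/2| = |a-b|/2 := by rw [abs_div]; norm_num
  calc |2 * Real.sin ((a-b)/2) * Real.cos ((a+b)/2)|
      = 2 * |Real.sin ((a-b)/2)| * |Real.cos ((a+b)/2)| := by
        rw [abs_mul, abs_mul]; norm_num
    _ ≤ 2 * |(a-b)/2| * 1 := by
        apply mul_le_mul _ h2 (abs_nonneg _) (by positivity)
        nlinarith [abs_nonneg (Real.sin ((a-b)/2))]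
    _ = |a - b| := by rw [h3]; ring

lemma pF_lip (a b : ℝ) : |pF b - pF a| ≤ π * |b - a| := by
  unfold pF
  calc |max (Real.sin (π * b)) 0 - max (Real.sin (π * a)) 0|
      ≤ |Real.sin (π * b) - Real.sin (π * a)| := abs_max_sub_max_le_abs _ _ _
    _ ≤ |π * b - π * a| := sin_lip _ _
    _ = π * |b - a| := by rw [← mul_sub, abs_mul, abs_of_pos Real.pi_pos]

lemma qF_lip (a b : ℝ) : |qF b - qF a| ≤ π * |b - a| := by
  unfold qF
  calc |max (-Real.sin (π * b)) 0 - max (-Real.sin (π * a)) 0|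
      ≤ |(-Real.sin (π * b)) - (-Real.sin (π * a))| := abs_max_sub_max_le_abs _ _ _
    _ = |Real.sin (π * a) - Real.sin (π * b)| := by ring_nf
    _ ≤ |π * a - π * b| := sin_lip _ _
    _ = π * |b - a| := by
        rw [← mul_sub, abs_mul, abs_of_pos Real.pi_pos, abs_sub_comm]

lemma lip_sum {m : ℕ} (σ : Fin (m+1) → ℝ) (hσ : Monotone σ) (F : ℝ → ℝ)
    (hF' : ∀ a b : ℝ, |F b - F a| ≤ π * |b - a|) :
    ∑ i : Fin m, |F (σ i.succ) - F (σ i.castSucc)| ≤ π * (σ (Fin.last m) - σ 0) := by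
  calc ∑ i : Fin m, |F (σ i.succ) - F (σ i.castSucc)|
      ≤ ∑ i : Fin m, π * (σ i.succ - σ i.castSucc) := by
        apply Finset.sum_le_sum
        intro i _
        have h := hF' (σ i.castSucc) (σ i.succ)
        rwa [abs_of_nonneg (sub_nonneg.2 (hσ (Fin.castSucc_le_succ i)))] at h
    _ = π * ∑ i : Fin m, (σ i.succ - σ i.castSucc) := (Finset.mul_sum _ _ _).symm
    _ = π * (σ (Fin.last m) - σ 0) := by rw [fin_telescope]

lemma fF_sum {m : ℕ} (τ : Fin (m+1) → ℝ) (hτ : Monotone τ) :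
    ∑ j : Fin m, |fF (τ j.succ) - fF (τ j.castSucc)|
      ≤ (Jf (τ (Fin.last m)) - Jf (τ 0)) + (Df (τ (Fin.last m)) - Df (τ 0)) := by
  calc ∑ j : Fin m, |fF (τ j.succ) - fF (τ j.castSucc)|
      ≤ ∑ j : Fin m, (|Jf (τ j.succ) - Jf (τ j.castSucc)| + |Df (τ j.succ) - Df (τ j.castSucc)|) := by
        apply Finset.sum_le_sum
        intro j _
        have e : fF (τ j.succ) - fF (τ j.castSucc)
            = (Jf (τ j.succ) - Jf (τ j.castSucc)) - (Df (τ j.succ) - Df (τ j.castSucc)) := by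
          rw [fF_eq, fF_eq]; ring
        rw [e]
        exact abs_sub _ _
    _ = ∑ j : Fin m, |Jf (τ j.succ) - Jf (τ j.castSucc)|
        + ∑ j : Fin m, |Df (τ j.succ) - Df (τ j.castSucc)| := Finset.sum_add_distrib
    _ = (Jf (τ (Fin.last m)) - Jf (τ 0)) + (Df (τ (Fin.last m)) - Df (τ 0)) := by
        rw [mono_sum_eq τ hτ Jf Jf_mono, mono_sum_eq τ hτ Df Df_mono]

lemma hF_sum {m : ℕ} (τ : Fin (m+1) → ℝ) (hτ : Monotone τ) :
    ∑ j : Fin m, |hF (τ j.succ) - hF (τ j.castSucc)|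
      ≤ (Jf (τ (Fin.last m) + 1) - Jf (τ 0 + 1)) + (Df (τ (Fin.last m) + 1) - Df (τ 0 + 1)) := by
  have h := fF_sum (fun j => τ j + 1) (fun i j hij => by simpa using hτ hij)
  simpa [hF_eq_fF] using h

lemma mixed_bound (s₁ s₂ x₁ x₂ : ℝ) :
    |mixedInc (fun t x => Real.cos (π * x) * Real.sin (π * t) *
        (if 0 < Real.sin (π * x) * Real.sin (π * t) then 1 else 0)) s₁ s₂ x₁ x₂|
      ≤ |pF s₂ - pF s₁| * |fF x₂ - fF x₁| + |qF s₂ - qF s₁| * |hF x₂ - hF x₁| := by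
  have e : mixedInc (fun t x => Real.cos (π * x) * Real.sin (π * t) *
        (if 0 < Real.sin (π * x) * Real.sin (π * t) then 1 else 0)) s₁ s₂ x₁ x₂
      = (pF s₂ - pF s₁) * (fF x₂ - fF x₁) + (qF s₂ - qF s₁) * (hF x₂ - hF x₁) := by
    simp only [mixedInc, g_decomp]; ring
  rw [e]
  calc |(pF s₂ - pF s₁) * (fF x₂ - fF x₁) + (qF s₂ - qF s₁) * (hF x₂ - hF x₁)|
      ≤ |(pF s₂ - pF s₁) * (fF x₂ - fF x₁)| + |(qF s₂ - qF s₁) * (hF x₂ - hF x₁)| := abs_add_le _ _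
    _ = |pF s₂ - pF s₁| * |fF x₂ - fF x₁| + |qF s₂ - qF s₁| * |hF x₂ - hF x₁| := by
        rw [abs_mul, abs_mul]

open Classical in
/-- The function `g(t,x) = cos(πx) sin(πt) 1_{sin(πx)sin(πt)>0}` has locally bounded
two-dimensional variation on `ℝ²`. -/
theorem locally_bounded_variation_example :
    let g : ℝ → ℝ → ℝ := fun t x =>
      Real.cos (π * x) * Real.sin (π * t) *
        (if 0 < Real.sin (π * x) * Real.sin (π * t) then 1 else 0)
    ∀ t₁ t₂ a b : ℝ, t₁ ≤ t₂ → a ≤ b → var2 g t₁ t₂ a b ≠ ⊤ := by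
  intro g t₁ t₂ a b ht hab
  set Cf : ℝ := (Jf b - Jf a) + (Df b - Df a) with hCf
  set Ch : ℝ := (Jf (b+1) - Jf (a+1)) + (Df (b+1) - Df (a+1)) with hCh
  set C : ℝ := π * (t₂ - t₁) * Cf + π * (t₂ - t₁) * Ch with hC
  apply ne_top_of_le_ne_top (ENNReal.ofReal_ne_top (r := C))
  rw [var2]
  refine iSup_le fun m => iSup_le fun n => iSup_le fun σ => iSup_le fun τ => iSup_le fun hP => ?_
  obtain ⟨hσ, hτ, hσ0, hσl, hτ0, hτl⟩ := hP
  have hσm := hσ.monotone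
  have hτm := hτ.monotone
  -- real-valued bound
  have hp : ∑ i : Fin m, |pF (σ i.succ) - pF (σ i.castSucc)| ≤ π * (t₂ - t₁) := by
    have := lip_sum σ hσm pF pF_lip
    rwa [hσl, hσ0] at this
  have hq : ∑ i : Fin m, |qF (σ i.succ) - qF (σ i.castSucc)| ≤ π * (t₂ - t₁) := by
    have := lip_sum σ hσm qF qF_lip
    rwa [hσl, hσ0] at this
  have hf : ∑ j : Fin n, |fF (τ j.succ) - fF (τ j.castSucc)| ≤ Cf := by
    have := fF_sum τ hτm
    rwa [hτl, hτ0, ← hCf] at this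
  have hh : ∑ j : Fin n, |hF (τ j.succ) - hF (τ j.castSucc)| ≤ Ch := by
    have := hF_sum τ hτm
    rwa [hτl, hτ0, ← hCh] at this
  have habs : ∀ (i : Fin m) (j : Fin n),
      |mixedInc g (σ i.castSucc) (σ i.succ) (τ j.castSucc) (τ j.succ)|
        ≤ |pF (σ i.succ) - pF (σ i.castSucc)| * |fF (τ j.succ) - fF (τ j.castSucc)|
          + |qF (σ i.succ) - qF (σ i.castSucc)| * |hF (τ j.succ) - hF (τ j.castSucc)| :=
    fun i j => mixed_bound _ _ _ _
  have hreal : ∑ i : Fin m, ∑ j : Fin n,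
      (|pF (σ i.succ) - pF (σ i.castSucc)| * |fF (τ j.succ) - fF (τ j.castSucc)|
        + |qF (σ i.succ) - qF (σ i.castSucc)| * |hF (τ j.succ) - hF (τ j.castSucc)|) ≤ C := by
    have e1 : ∑ i : Fin m, ∑ j : Fin n,
        (|pF (σ i.succ) - pF (σ i.castSucc)| * |fF (τ j.succ) - fF (τ j.castSucc)|
          + |qF (σ i.succ) - qF (σ i.castSucc)| * |hF (τ j.succ) - hF (τ j.castSucc)|)
        = (∑ i : Fin m, |pF (σ i.succ) - pF (σ i.castSucc)|)
            * (∑ j : Fin n, |fF (τ j.succ) - fF (τ j.castSucc)|)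
          + (∑ i : Fin m, |qF (σ i.succ) - qF (σ i.castSucc)|)
            * (∑ j : Fin n, |hF (τ j.succ) - hF (τ j.castSucc)|) := by
      rw [Fintype.sum_mul_sum, Fintype.sum_mul_sum, ← Finset.sum_add_distrib]
      apply Finset.sum_congr rfl
      intro i _
      rw [← Finset.sum_add_distrib]
    rw [e1, hC]
    have h1 : (0:ℝ) ≤ π * (t₂ - t₁) := by
      have := Real.pi_pos; nlinarith
    have hfs : (0:ℝ) ≤ ∑ j : Fin n, |fF (τ j.succ) - fF (τ j.castSucc)| :=
      Finset.sum_nonneg fun j _ => abs_nonneg _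
    have hhs : (0:ℝ) ≤ ∑ j : Fin n, |hF (τ j.succ) - hF (τ j.castSucc)| :=
      Finset.sum_nonneg fun j _ => abs_nonneg _
    have := mul_le_mul hp hf hfs h1
    have := mul_le_mul hq hh hhs h1
    linarith
  calc ∑ i : Fin m, ∑ j : Fin n,
        ENNReal.ofReal |mixedInc g (σ i.castSucc) (σ i.succ) (τ j.castSucc) (τ j.succ)|
      ≤ ∑ i : Fin m, ∑ j : Fin n, ENNReal.ofReal
          (|pF (σ i.succ) - pF (σ i.castSucc)| * |fF (τ j.succ) - fF (τ j.castSucc)|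
            + |qF (σ i.succ) - qF (σ i.castSucc)| * |hF (τ j.succ) - hF (τ j.castSucc)|) := by
        apply Finset.sum_le_sum; intro i _
        apply Finset.sum_le_sum; intro j _
        exact ENNReal.ofReal_le_ofReal (habs i j)
    _ = ENNReal.ofReal (∑ i : Fin m, ∑ j : Fin n,
          (|pF (σ i.succ) - pF (σ i.castSucc)| * |fF (τ j.succ) - fF (τ j.castSucc)|
            + |qF (σ i.succ) - qF (σ i.castSucc)| * |hF (τ j.succ) - hF (τ j.castSucc)|)) := by
        rw [ENNReal.ofReal_sum_of_nonneg]
        · apply Finset.sum_congr rfl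
          intro i _
          rw [ENNReal.ofReal_sum_of_nonneg]
          intro j _
          positivity
        · intro i _
          apply Finset.sum_nonneg
          intro j _
          positivity
    _ ≤ ENNReal.ofReal C := ENNReal.ofReal_le_ofReal hreal
end

section
/- Let h : ℝ² → ℝ be defined by h(t,x) = cos(πx)·(sin(πx))^{1/3}·sin(πt) on each unit square [i,i+1)×[j,j+1) with i+j even (first coordinate t, second x), and h(t,x) = 0 otherwise. Then h is continuous on ℝ² and has locally bounded two-dimensional variation. -/
open MeasureTheory Set Filter Topology Real

/-- The real cube root. -/
noncomputable def cbrt (y : ℝ) : ℝ := Real.sign y * |y| ^ ((1:ℝ)/3)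

/-! On `[i, i+1) × [j, j+1)` the signs of `sin (π t)` and `sin (π x)` are `(-1)^i` and `(-1)^j`,
so with `φ x = cos (π x) · ∛(sin (π x))` and `χ x = cos (π x) · |sin (π x)|^{1/3}` we have
`h t x = sin (π t) / 2 · φ x + |sin (π t)| / 2 · χ x`: the two terms agree on the squares with
`i + j` even and cancel on the others. This formula makes `h` visibly continuous. The mixed
increment of `f t · g x` is the product of the one-dimensional increments of `f` and `g`, so the
two-dimensional variation of each term is at most the product of the one-dimensional variations,
and all four factors have locally bounded variation: the `t`-factors are Lipschitz,
`|sin (π x)|^{1/3}` is `1`-periodic and monotone on `[0, 1/2]` and on `[1/2, 1]`, and `φ` is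
`1`-periodic and equal to `χ` on `[0, 1]`. -/

lemma eVariationOn_neg {α E : Type*} [LinearOrder α] [SeminormedAddCommGroup E] (f : α → E)
    (s : Set α) : eVariationOn (fun x => -f x) s = eVariationOn f s := by
  unfold eVariationOn
  exact iSup_congr fun p => Finset.sum_congr rfl fun i _ => edist_neg_neg _ _

lemma AntitoneOn.locallyBoundedVariationOn {α : Type*} [LinearOrder α] {f : α → ℝ} {s : Set α}
    (hf : AntitoneOn f s) : LocallyBoundedVariationOn f s := by
  intro a b ha hb
  have := hf.neg.locallyBoundedVariationOn a b ha hb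
  rwa [BoundedVariationOn, eVariationOn_neg] at this

lemma LipschitzWith.locallyBoundedVariationOn_comp_mul {g : ℝ → ℝ} {K : NNReal}
    (hg : LipschitzWith K g) (c : ℝ) : LocallyBoundedVariationOn (fun x => g (c * x)) univ :=
  (hg.comp (lipschitzWith_smul c)).locallyBoundedVariationOn univ

lemma LocallyBoundedVariationOn.div_const {α : Type*} [LinearOrder α] {f : α → ℝ} {s : Set α}
    (hf : LocallyBoundedVariationOn f s) (c : ℝ) :
    LocallyBoundedVariationOn (fun x => f x / c) s :=
  hf.fun_mul (monotoneOn_const : MonotoneOn (fun _ => c⁻¹) s).locallyBoundedVariationOn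

namespace Function.Periodic

variable {E : Type*} [PseudoEMetricSpace E] {f : ℝ → E} {p : ℝ}

lemma eVariationOn_Icc_add (hf : Periodic f p) (a b : ℝ) :
    eVariationOn f (Icc (a + p) (b + p)) = eVariationOn f (Icc a b) := by
  rw [← image_add_const_Icc,
    ← eVariationOn.comp_eq_of_monotoneOn f (· + p) fun _ _ _ _ h => by simpa using h]
  exact congrArg (eVariationOn · _) (funext hf)

lemma locallyBoundedVariationOn (hf : Periodic f p) (hp : 0 < p) (c : ℝ)
    (h : BoundedVariationOn f (Icc c (c + p))) : LocallyBoundedVariationOn f univ := by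
  intro a b _ _
  obtain ⟨k, hk⟩ : ∃ k : ℤ, c + k * p ≤ a :=
    ⟨⌊(a - c) / p⌋, by linarith [(le_div_iff₀ hp).mp (Int.floor_le ((a - c) / p))]⟩
  obtain ⟨n, hn⟩ : ∃ n : ℕ, b ≤ c + (k + n) * p :=
    ⟨⌈(b - c) / p - k⌉₊, by
      linarith [(div_le_iff₀ hp).mp (sub_le_iff_le_add.mp (Nat.le_ceil ((b - c) / p - k)))]⟩
  set E : ℕ → ℝ := fun i => c + (k + i) * p
  have hE : Monotone E := fun i j hij => by
    simp only [E]
    gcongr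
  have hperiod : ∀ i, eVariationOn f (univ ∩ Icc (E i) (E (i + 1))) =
      eVariationOn f (Icc c (c + p)) := fun i => by
    rw [univ_inter, ← (hf.int_mul (k + i)).eVariationOn_Icc_add c (c + p)]
    congr 2 <;> simp only [E] <;> push_cast <;> ring
  have hsub : univ ∩ Icc a b ⊆ univ ∩ Icc (E 0) (E n) :=
    inter_subset_inter_right _ (Icc_subset_Icc (by simpa [E] using hk) hn)
  refine ne_top_of_le_ne_top ?_ (eVariationOn.mono f hsub)
  rw [← eVariationOn.sum f hE (fun _ _ _ => mem_univ _), Finset.sum_congr rfl fun i _ => hperiod i,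
    Finset.sum_const, Finset.card_range, nsmul_eq_mul]
  exact ENNReal.mul_ne_top (ENNReal.natCast_ne_top n) h

end Function.Periodic

lemma sum_le_eVariationOn_Icc (g : ℝ → ℝ) {n : ℕ} {τ : Fin (n + 1) → ℝ} (hτ : Monotone τ) :
    ∑ j : Fin n, ENNReal.ofReal |g (τ j.succ) - g (τ j.castSucc)| ≤
      eVariationOn g (Icc (τ 0) (τ (Fin.last n))) := by
  set u : ℕ → ℝ := fun j => τ (Fin.clamp j n)
  have hu : Monotone u := fun i j hij => hτ (Fin.mk_le_mk.2 (min_le_min_right n hij))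
  have hmem : ∀ j, u j ∈ Icc (τ 0) (τ (Fin.last n)) := fun j =>
    ⟨hτ (Fin.zero_le _), hτ (Fin.le_last _)⟩
  refine le_of_eq_of_le ?_ (eVariationOn.sum_le (n := n) hu hmem)
  rw [← Fin.sum_univ_eq_sum_range (fun j => edist (g (u (j + 1))) (g (u j)))]
  refine Finset.sum_congr rfl fun j _ => ?_
  have hsucc : Fin.clamp (j + 1) n = j.succ := Fin.ext (by simp [Fin.clamp])
  have hcast : Fin.clamp j n = j.castSucc := Fin.ext (by simp [Fin.clamp, j.isLt.le])
  simp only [u, hsucc, hcast, edist_dist, Real.dist_eq]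

lemma mixedInc_add (f g : ℝ → ℝ → ℝ) (s₁ s₂ x₁ x₂ : ℝ) :
    mixedInc (f + g) s₁ s₂ x₁ x₂ = mixedInc f s₁ s₂ x₁ x₂ + mixedInc g s₁ s₂ x₁ x₂ := by
  simp only [mixedInc, Pi.add_apply]
  ring

lemma mixedInc_mul (f g : ℝ → ℝ) (s₁ s₂ x₁ x₂ : ℝ) :
    mixedInc (fun t x => f t * g x) s₁ s₂ x₁ x₂ = (f s₂ - f s₁) * (g x₂ - g x₁) := by
  simp only [mixedInc]
  ring

lemma sum_le_var2 (f : ℝ → ℝ → ℝ) {m n : ℕ} {σ : Fin (m + 1) → ℝ} {τ : Fin (n + 1) → ℝ}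
    (hσ : StrictMono σ) (hτ : StrictMono τ) :
    ∑ i : Fin m, ∑ j : Fin n,
        ENNReal.ofReal |mixedInc f (σ i.castSucc) (σ i.succ) (τ j.castSucc) (τ j.succ)| ≤
      var2 f (σ 0) (σ (Fin.last m)) (τ 0) (τ (Fin.last n)) :=
  le_iSup_of_le m <| le_iSup_of_le n <| le_iSup_of_le σ <| le_iSup_of_le τ <|
    le_iSup_of_le ⟨hσ, hτ, rfl, rfl, rfl, rfl⟩ le_rfl

lemma var2_add_le (f g : ℝ → ℝ → ℝ) (t s a x : ℝ) :
    var2 (f + g) t s a x ≤ var2 f t s a x + var2 g t s a x := by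
  simp only [var2, iSup_le_iff]
  rintro m n σ τ ⟨hσ, hτ, rfl, rfl, rfl, rfl⟩
  calc _ ≤ ∑ i : Fin m, ∑ j : Fin n,
        (ENNReal.ofReal |mixedInc f (σ i.castSucc) (σ i.succ) (τ j.castSucc) (τ j.succ)| +
          ENNReal.ofReal |mixedInc g (σ i.castSucc) (σ i.succ) (τ j.castSucc) (τ j.succ)|) := by
        gcongr with i _ j _
        rw [mixedInc_add, ← ENNReal.ofReal_add (abs_nonneg _) (abs_nonneg _)]
        exact ENNReal.ofReal_le_ofReal (abs_add_le _ _)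
    _ ≤ _ := by
        simp only [Finset.sum_add_distrib]
        exact add_le_add (sum_le_var2 f hσ hτ) (sum_le_var2 g hσ hτ)

lemma var2_mul_le (f g : ℝ → ℝ) (t s a x : ℝ) :
    var2 (fun t x => f t * g x) t s a x ≤ eVariationOn f (Icc t s) * eVariationOn g (Icc a x) := by
  simp only [var2, iSup_le_iff]
  rintro m n σ τ ⟨hσ, hτ, rfl, rfl, rfl, rfl⟩
  calc _ = (∑ i : Fin m, ENNReal.ofReal |f (σ i.succ) - f (σ i.castSucc)|) *
        ∑ j : Fin n, ENNReal.ofReal |g (τ j.succ) - g (τ j.castSucc)| := by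
        simp only [Finset.sum_mul_sum, mixedInc_mul, abs_mul, ENNReal.ofReal_mul (abs_nonneg _)]
    _ ≤ _ := mul_le_mul' (sum_le_eVariationOn_Icc f hσ.monotone)
        (sum_le_eVariationOn_Icc g hτ.monotone)

lemma var2_mul_ne_top {f g : ℝ → ℝ} (hf : LocallyBoundedVariationOn f univ)
    (hg : LocallyBoundedVariationOn g univ) (t s a x : ℝ) :
    var2 (fun t x => f t * g x) t s a x ≠ ⊤ := by
  have hft := hf t s (mem_univ _) (mem_univ _)
  have hgt := hg a x (mem_univ _) (mem_univ _)
  rw [univ_inter] at hft hgt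
  exact ne_top_of_le_ne_top (ENNReal.mul_ne_top hft hgt) (var2_mul_le f g t s a x)

lemma cbrt_eq_rpow_sub_rpow (y : ℝ) :
    cbrt y = max y 0 ^ ((1:ℝ)/3) - max (-y) 0 ^ ((1:ℝ)/3) := by
  rcases lt_trichotomy y 0 with hy | rfl | hy
  · simp [cbrt, Real.sign_of_neg hy, abs_of_neg hy, hy.le]
  · simp [cbrt]
  · simp [cbrt, Real.sign_of_pos hy, abs_of_pos hy, hy.le]

lemma continuous_cbrt : Continuous cbrt := by
  simp_rw [funext cbrt_eq_rpow_sub_rpow]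
  fun_prop (disch := norm_num)

lemma cbrt_of_nonneg {y : ℝ} (hy : 0 ≤ y) : cbrt y = y ^ ((1:ℝ)/3) := by
  simp [cbrt_eq_rpow_sub_rpow, hy, Real.zero_rpow]

lemma cbrt_neg (y : ℝ) : cbrt (-y) = -cbrt y := by
  simp [cbrt, Real.sign_neg]

lemma cbrt_neg_one_zpow_mul (n : ℤ) {y : ℝ} (hy : 0 ≤ y) :
    cbrt ((-1) ^ n * y) = (-1) ^ n * y ^ ((1:ℝ)/3) := by
  rcases n.even_or_odd with hn | hn
  · simp [hn.neg_one_zpow, cbrt_of_nonneg hy]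
  · simp [hn.neg_one_zpow, cbrt_neg, cbrt_of_nonneg hy]

lemma sin_pi_mul_eq_neg_one_zpow_floor_mul_abs (x : ℝ) :
    Real.sin (π * x) = (-1) ^ ⌊x⌋ * |Real.sin (π * x)| := by
  have hx : π * x = π * Int.fract x + ⌊x⌋ * π := by unfold Int.fract; ring
  have hnonneg : 0 ≤ Real.sin (π * Int.fract x) :=
    Real.sin_nonneg_of_nonneg_of_le_pi (by positivity)
      (by nlinarith [Int.fract_lt_one x, Real.pi_pos])
  rw [hx, Real.sin_add_int_mul_pi, abs_mul, abs_of_nonneg hnonneg, abs_zpow, abs_neg, abs_one,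
    one_zpow, one_mul]

noncomputable def cosCbrtSin (x : ℝ) : ℝ := Real.cos (π * x) * cbrt (Real.sin (π * x))

noncomputable def cosAbsSinRpow (x : ℝ) : ℝ := Real.cos (π * x) * |Real.sin (π * x)| ^ ((1:ℝ)/3)

lemma cosCbrtSin_eq_neg_one_zpow_floor_mul (x : ℝ) :
    cosCbrtSin x = (-1) ^ ⌊x⌋ * cosAbsSinRpow x := by
  rw [cosCbrtSin, sin_pi_mul_eq_neg_one_zpow_floor_mul_abs x,
    cbrt_neg_one_zpow_mul _ (abs_nonneg _), cosAbsSinRpow]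
  ring

lemma exists_even_add_mem_Ico_iff (t x : ℝ) :
    (∃ i j : ℤ, Even (i + j) ∧ t ∈ Ico (i : ℝ) (i + 1) ∧ x ∈ Ico (j : ℝ) (j + 1)) ↔
      Even (⌊t⌋ + ⌊x⌋) := by
  simp only [Set.mem_Ico, ← Int.floor_eq_iff]
  constructor
  · rintro ⟨i, j, h, rfl, rfl⟩
    exact h
  · exact fun h => ⟨_, _, h, rfl, rfl⟩

open Classical in
lemma checkerboard_eq (t x : ℝ) :
    (if ∃ i j : ℤ, Even (i + j) ∧ t ∈ Set.Ico (i : ℝ) (i + 1) ∧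
          x ∈ Set.Ico (j : ℝ) (j + 1) then
        Real.cos (π * x) * cbrt (Real.sin (π * x)) * Real.sin (π * t)
      else 0) =
      Real.sin (π * t) / 2 * cosCbrtSin x + |Real.sin (π * t)| / 2 * cosAbsSinRpow x := by
  have hsign : Real.sin (π * t) * cosCbrtSin x =
      (-1) ^ (⌊t⌋ + ⌊x⌋) * (|Real.sin (π * t)| * cosAbsSinRpow x) := by
    rw [cosCbrtSin_eq_neg_one_zpow_floor_mul, zpow_add₀ (by norm_num)]
    nth_rewrite 1 [sin_pi_mul_eq_neg_one_zpow_floor_mul_abs t]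
    ring
  rw [exists_even_add_mem_Ico_iff, ← cosCbrtSin, mul_comm]
  split_ifs with h
  · rw [h.neg_one_zpow] at hsign
    linarith
  · rw [(Int.not_even_iff_odd.mp h).neg_one_zpow] at hsign
    linarith

lemma sin_pi_mul_one_sub (x : ℝ) : Real.sin (π * (1 - x)) = Real.sin (π * x) := by
  rw [mul_one_sub, Real.sin_pi_sub]

lemma monotoneOn_abs_sin_pi_mul_rpow :
    MonotoneOn (fun x => |Real.sin (π * x)| ^ ((1:ℝ)/3)) (Icc 0 (1/2)) := by
  intro x hx y hy hxy
  have hπ := Real.pi_pos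
  have hsin : ∀ z ∈ Icc (0:ℝ) (1/2), 0 ≤ Real.sin (π * z) := fun z hz =>
    Real.sin_nonneg_of_nonneg_of_le_pi (by nlinarith [hz.1]) (by nlinarith [hz.2])
  simp only [abs_of_nonneg (hsin x hx), abs_of_nonneg (hsin y hy)]
  exact Real.rpow_le_rpow (hsin x hx)
    (Real.sin_le_sin_of_le_of_le_pi_div_two (by nlinarith [hx.1]) (by nlinarith [hy.2])
      (by gcongr)) (by norm_num)

lemma antitoneOn_abs_sin_pi_mul_rpow :
    AntitoneOn (fun x => |Real.sin (π * x)| ^ ((1:ℝ)/3)) (Icc (1/2) 1) := by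
  intro x hx y hy hxy
  simp only [← sin_pi_mul_one_sub x, ← sin_pi_mul_one_sub y]
  exact monotoneOn_abs_sin_pi_mul_rpow ⟨by linarith [hy.2], by linarith [hy.1]⟩
    ⟨by linarith [hx.2], by linarith [hx.1]⟩ (by linarith)

lemma locallyBoundedVariationOn_abs_sin_pi_mul_rpow :
    LocallyBoundedVariationOn (fun x => |Real.sin (π * x)| ^ ((1:ℝ)/3)) univ := by
  have hperiod : Function.Periodic (fun x => |Real.sin (π * x)| ^ ((1:ℝ)/3)) 1 := fun x => by
    simp only [mul_add, mul_one, Real.sin_add_pi, abs_neg]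
  refine hperiod.locallyBoundedVariationOn one_pos 0 ?_
  have h₁ := monotoneOn_abs_sin_pi_mul_rpow.locallyBoundedVariationOn 0 (1/2)
    (left_mem_Icc.2 (by norm_num)) (right_mem_Icc.2 (by norm_num))
  have h₂ := antitoneOn_abs_sin_pi_mul_rpow.locallyBoundedVariationOn (1/2) 1
    (left_mem_Icc.2 (by norm_num)) (right_mem_Icc.2 (by norm_num))
  rw [inter_self] at h₁ h₂
  rw [BoundedVariationOn, zero_add, ← univ_inter (Icc 0 1),
    ← eVariationOn.Icc_add_Icc _ (by norm_num : (0:ℝ) ≤ 1/2) (by norm_num) (mem_univ _),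
    univ_inter, univ_inter]
  exact ENNReal.add_ne_top.2 ⟨h₁, h₂⟩

lemma locallyBoundedVariationOn_cosAbsSinRpow : LocallyBoundedVariationOn cosAbsSinRpow univ :=
  (Real.lipschitzWith_cos.locallyBoundedVariationOn_comp_mul π).fun_mul
    locallyBoundedVariationOn_abs_sin_pi_mul_rpow

lemma cosCbrtSin_periodic : Function.Periodic cosCbrtSin 1 := fun x => by
  simp only [cosCbrtSin, mul_add, mul_one, Real.sin_add_pi, Real.cos_add_pi, cbrt_neg, neg_mul_neg]

lemma locallyBoundedVariationOn_cosCbrtSin : LocallyBoundedVariationOn cosCbrtSin univ := by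
  refine cosCbrtSin_periodic.locallyBoundedVariationOn one_pos 0 ?_
  rw [zero_add]
  have h := locallyBoundedVariationOn_cosAbsSinRpow 0 1 (mem_univ _) (mem_univ _)
  rw [univ_inter] at h
  refine (eVariationOn.eq_of_eqOn fun x hx => ?_).trans_ne h
  have hsin : 0 ≤ Real.sin (π * x) :=
    Real.sin_nonneg_of_nonneg_of_le_pi (by nlinarith [hx.1, Real.pi_pos])
      (by nlinarith [hx.2, Real.pi_pos])
  rw [cosCbrtSin, cosAbsSinRpow, abs_of_nonneg hsin, cbrt_of_nonneg hsin]

lemma continuous_cosCbrtSin : Continuous cosCbrtSin :=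
  (by fun_prop : Continuous fun x => Real.cos (π * x)).mul
    (continuous_cbrt.comp (by fun_prop : Continuous fun x => Real.sin (π * x)))

lemma continuous_cosAbsSinRpow : Continuous cosAbsSinRpow := by
  unfold cosAbsSinRpow
  fun_prop (disch := norm_num)

open Classical in
/-- The function equal to `cos(πx)(sin(πx))^{1/3} sin(πt)` on unit squares `[i,i+1)×[j,j+1)`
with `i+j` even and `0` otherwise is continuous on `ℝ²` and has locally bounded
two-dimensional variation. -/
theorem continuous_and_bounded_variation_example :
    let h : ℝ → ℝ → ℝ := fun t x =>
      if ∃ i j : ℤ, Even (i + j) ∧ t ∈ Set.Ico (i : ℝ) (i + 1) ∧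
          x ∈ Set.Ico (j : ℝ) (j + 1) then
        Real.cos (π * x) * cbrt (Real.sin (π * x)) * Real.sin (π * t)
      else 0
    Continuous (fun p : ℝ × ℝ => h p.1 p.2) ∧
      (∀ t₁ t₂ a b : ℝ, t₁ ≤ t₂ → a ≤ b → var2 h t₁ t₂ a b ≠ ⊤) := by
  intro h
  have hh : h = (fun t x => Real.sin (π * t) / 2 * cosCbrtSin x) +
      fun t x => |Real.sin (π * t)| / 2 * cosAbsSinRpow x :=
    funext₂ checkerboard_eq
  have hsin : LocallyBoundedVariationOn (fun t => Real.sin (π * t) / 2) univ :=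
    (Real.lipschitzWith_sin.locallyBoundedVariationOn_comp_mul π).div_const 2
  have habs : LocallyBoundedVariationOn (fun t => |Real.sin (π * t)| / 2) univ :=
    ((lipschitzWith_one_norm.comp Real.lipschitzWith_sin).locallyBoundedVariationOn_comp_mul
      π).div_const 2
  refine ⟨?_, fun t₁ t₂ a b _ _ => ?_⟩
  · simp only [hh, Pi.add_apply]
    have := continuous_cosCbrtSin
    have := continuous_cosAbsSinRpow
    fun_prop
  · rw [hh]
    exact ne_top_of_le_ne_top
      (ENNReal.add_ne_top.2 ⟨var2_mul_ne_top hsin locallyBoundedVariationOn_cosCbrtSin _ _ _ _,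
        var2_mul_ne_top habs locallyBoundedVariationOn_cosAbsSinRpow _ _ _ _⟩)
      (var2_add_le _ _ _ _ _ _)
end

section
/- Let f, g : ℝ → ℝ with f left continuous of locally bounded variation and g continuous of locally bounded variation, both restricted to an interval [a,b]. If f_n → f pointwise on [a,b] with uniformly bounded total variations V_{f_n}[a,b] ≤ C, and g is continuous with compact support in (a,b), then ∫_a^b g dμ_{f_n} → ∫_a^b g dμ_f, where μ_h denotes the Lebesgue–Stieltjes signed measure of h. -/
open MeasureTheory Set Filter Topology Real

/-!
Approximate `∫ g dμ_h` by the Riemann–Stieltjes sums `∑ g(xⱼ) (h(xⱼ₊₁) - h(xⱼ))` over the dyadic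
partitions of `[a,b]`. Since `μ_h [xⱼ, xⱼ₊₁) = h(xⱼ₊₁) - h(xⱼ)` and `g` is uniformly continuous
with `g b = 0`, these sums converge to the integral as the partition is refined. The masses of the
measures of `fₙ` are not controlled, only the variations of the `fₙ` are; but passing from a
partition to a refinement changes the sum by at most `ε · V_h[a,b]` when `g` oscillates by at most
`ε` on the cells of the coarser one, so the sum at a fixed level approximates the integral
uniformly in `n`. At a fixed level the sums converge as `n → ∞`
because `fₙ → f` pointwise, and an `ε/3` argument concludes.
-/

open scoped ENNReal

def stieltjesSum (g h : ℝ → ℝ) (y : ℕ → ℝ) (n : ℕ) : ℝ :=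
  ∑ j ∈ Finset.range n, g (y j) * (h (y (j + 1)) - h (y j))

def variationSum (h : ℝ → ℝ) (y : ℕ → ℝ) (n : ℕ) : ℝ :=
  ∑ j ∈ Finset.range n, |h (y (j + 1)) - h (y j)|

section PartitionSums

variable {g h : ℝ → ℝ} {y : ℕ → ℝ}

lemma stieltjesSum_add (m n : ℕ) :
    stieltjesSum g h y (m + n) =
      stieltjesSum g h y m + stieltjesSum g h (fun r => y (m + r)) n := by
  simp only [stieltjesSum, Finset.sum_range_add, add_assoc]

lemma variationSum_add (m n : ℕ) :
    variationSum h y (m + n) = variationSum h y m + variationSum h (fun r => y (m + r)) n := by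
  simp only [variationSum, Finset.sum_range_add, add_assoc]

lemma tendsto_stieltjesSum {ι : Type*} {l : Filter ι} {hs : ι → ℝ → ℝ} {n : ℕ}
    (hconv : ∀ j ≤ n, Tendsto (fun i => hs i (y j)) l (𝓝 (h (y j)))) :
    Tendsto (fun i => stieltjesSum g (hs i) y n) l (𝓝 (stieltjesSum g h y n)) :=
  tendsto_finsetSum _ fun j hj =>
    ((hconv (j + 1) (Finset.mem_range.1 hj)).sub (hconv j (Finset.mem_range.1 hj).le)).const_mul _

lemma ofReal_variationSum_le_var1 (h : ℝ → ℝ) (hy : StrictMono y) {n : ℕ} {a b : ℝ}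
    (ha : y 0 = a) (hb : y n = b) :
    ENNReal.ofReal (variationSum h y n) ≤ var1 h a b := by
  rw [variationSum, ENNReal.ofReal_sum_of_nonneg fun j _ => abs_nonneg _,
    ← Fin.sum_univ_eq_sum_range]
  refine le_iSup_of_le n <| le_iSup_of_le (fun j : Fin (n + 1) => y j) <|
    le_iSup_of_le ⟨hy.comp Fin.val_strictMono, ha, hb⟩ (le_of_eq ?_)
  simp [Fin.val_succ]

lemma abs_stieltjesSum_sub_le_of_cell {ε : ℝ} {d : ℕ}
    (hmod : ∀ r < d, |g (y r) - g (y 0)| ≤ ε) :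
    |stieltjesSum g h y d - g (y 0) * (h (y d) - h (y 0))| ≤ ε * variationSum h y d := by
  rw [← Finset.sum_range_sub (fun r => h (y r)), Finset.mul_sum, stieltjesSum,
    ← Finset.sum_sub_distrib, variationSum, Finset.mul_sum]
  refine (Finset.abs_sum_le_sum_abs _ _).trans (Finset.sum_le_sum fun r hr => ?_)
  rw [← sub_mul, abs_mul]
  exact mul_le_mul_of_nonneg_right (hmod r (Finset.mem_range.1 hr)) (abs_nonneg _)

lemma abs_stieltjesSum_sub_coarsen_le {ε : ℝ} {n d : ℕ}
    (hmod : ∀ i < n, ∀ r < d, |g (y (i * d + r)) - g (y (i * d))| ≤ ε) :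
    |stieltjesSum g h y (n * d) - stieltjesSum g h (fun i => y (i * d)) n|
      ≤ ε * variationSum h y (n * d) := by
  induction n with
  | zero => simp [stieltjesSum, variationSum]
  | succ n ih =>
    have hcell := abs_stieltjesSum_sub_le_of_cell (h := h) (y := fun r => y (n * d + r))
      (fun r hr => by simpa using hmod n n.lt_succ_self r hr)
    set cell := g (y (n * d + 0)) * (h (y (n * d + d)) - h (y (n * d + 0)))
    have hcoarse : stieltjesSum g h (fun i => y (i * d)) (n + 1) =
        stieltjesSum g h (fun i => y (i * d)) n + cell := by
      simp [cell, stieltjesSum, Finset.sum_range_succ, add_mul]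
    rw [add_mul, one_mul, stieltjesSum_add, variationSum_add, hcoarse, mul_add]
    calc _ = |(stieltjesSum g h y (n * d) - stieltjesSum g h (fun i => y (i * d)) n) +
          (stieltjesSum g h (fun r => y (n * d + r)) d - cell)| := by ring_nf
      _ ≤ _ := (abs_add_le _ _).trans (add_le_add (ih fun i hi => hmod i (by omega)) hcell)

end PartitionSums

noncomputable def dyadicPt (a b : ℝ) (k j : ℕ) : ℝ := a + (b - a) * j / 2 ^ k

section Dyadic

variable {a b : ℝ}

lemma dyadicPt_zero (k : ℕ) : dyadicPt a b k 0 = a := by simp [dyadicPt]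

lemma dyadicPt_two_pow (k : ℕ) : dyadicPt a b k (2 ^ k) = b := by
  simp [dyadicPt]

lemma dyadicPt_succ_sub (k j : ℕ) :
    dyadicPt a b k (j + 1) - dyadicPt a b k j = (b - a) / 2 ^ k := by
  simp only [dyadicPt]; push_cast; ring

lemma dyadicPt_strictMono (hab : a < b) (k : ℕ) : StrictMono (dyadicPt a b k) :=
  strictMono_nat_of_lt_succ fun j => by
    have := dyadicPt_succ_sub (a := a) (b := b) k j
    have : 0 < (b - a) / 2 ^ k := by have := sub_pos.2 hab; positivity
    linarith

lemma dyadicPt_monotone (hab : a ≤ b) (k : ℕ) : Monotone (dyadicPt a b k) :=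
  monotone_nat_of_le_succ fun j => by
    have := dyadicPt_succ_sub (a := a) (b := b) k j
    have : 0 ≤ (b - a) / 2 ^ k := by have := sub_nonneg.2 hab; positivity
    linarith

lemma dyadicPt_mem_Icc (hab : a ≤ b) {k j : ℕ} (hj : j ≤ 2 ^ k) :
    dyadicPt a b k j ∈ Icc a b := by
  have hj' : (j : ℝ) ≤ 2 ^ k := by exact_mod_cast hj
  have hba := sub_nonneg.2 hab
  have h0 : 0 ≤ (b - a) * j / 2 ^ k := by positivity
  have h1 : (b - a) * j / 2 ^ k ≤ b - a := by
    rw [div_le_iff₀ (by positivity)]; exact mul_le_mul_of_nonneg_left hj' hba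
  rw [dyadicPt, mem_Icc]
  constructor <;> linarith

lemma dyadicPt_add_mul_two_pow (k d i r : ℕ) :
    dyadicPt a b (k + d) (i * 2 ^ d + r) = dyadicPt a b k i + (b - a) * r / 2 ^ (k + d) := by
  simp only [dyadicPt, pow_add]; push_cast; field_simp; ring

lemma dyadicPt_mul_two_pow (k d i : ℕ) :
    dyadicPt a b (k + d) (i * 2 ^ d) = dyadicPt a b k i := by
  simpa using dyadicPt_add_mul_two_pow (a := a) (b := b) k d i 0

lemma eventually_abs_sub_le_of_uniformContinuous {g : ℝ → ℝ} (hg : UniformContinuous g)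
    (a b : ℝ) {ε : ℝ} (hε : 0 < ε) :
    ∀ᶠ k : ℕ in atTop, ∀ u v, |u - v| ≤ (b - a) / 2 ^ k → |g u - g v| ≤ ε := by
  obtain ⟨δ, hδ, hδg⟩ := Metric.uniformContinuous_iff.1 hg ε hε
  have hmesh : Tendsto (fun k : ℕ => (b - a) / 2 ^ k) atTop (𝓝 0) :=
    tendsto_const_nhds.div_atTop (tendsto_pow_atTop_atTop_of_one_lt one_lt_two)
  filter_upwards [hmesh.eventually (gt_mem_nhds hδ)] with k hk u v huv
  exact (hδg (show dist u v < δ by rw [Real.dist_eq]; linarith)).le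

end Dyadic

section DyadicStieltjes

variable {a b : ℝ} {g h : ℝ → ℝ} {ε : ℝ} {k : ℕ}

lemma variationSum_dyadicPt_le_toReal (hab : a < b) {V : ℝ≥0∞} (hV : var1 h a b ≤ V)
    (hV_top : V ≠ ⊤) (m : ℕ) : variationSum h (dyadicPt a b m) (2 ^ m) ≤ V.toReal :=
  (ENNReal.ofReal_le_iff_le_toReal hV_top).1 <|
    (ofReal_variationSum_le_var1 h (dyadicPt_strictMono hab m) (dyadicPt_zero m)
      (dyadicPt_two_pow m)).trans hV

lemma abs_stieltjesSum_dyadicPt_add_sub_le (hab : a ≤ b)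
    (hmod : ∀ u v, |u - v| ≤ (b - a) / 2 ^ k → |g u - g v| ≤ ε) (d : ℕ) :
    |stieltjesSum g h (dyadicPt a b (k + d)) (2 ^ (k + d)) -
        stieltjesSum g h (dyadicPt a b k) (2 ^ k)|
      ≤ ε * variationSum h (dyadicPt a b (k + d)) (2 ^ (k + d)) := by
  rw [pow_add, ← funext (dyadicPt_mul_two_pow k d)]
  refine abs_stieltjesSum_sub_coarsen_le fun i _ r hr => hmod _ _ ?_
  have hr' : (r : ℝ) ≤ 2 ^ d := by exact_mod_cast hr.le
  have hba := sub_nonneg.2 hab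
  rw [dyadicPt_add_mul_two_pow, dyadicPt_mul_two_pow, add_sub_cancel_left,
    abs_of_nonneg (by positivity), div_le_div_iff₀ (by positivity) (by positivity), pow_add,
    mul_comm (2 ^ k : ℝ), ← mul_assoc]
  exact mul_le_mul_of_nonneg_right (mul_le_mul_of_nonneg_left hr' hba) (by positivity)

lemma abs_sub_stieltjesSum_dyadicPt_le (hab : a ≤ b) (hε : 0 ≤ ε)
    (hmod : ∀ u v, |u - v| ≤ (b - a) / 2 ^ k → |g u - g v| ≤ ε) {L V : ℝ}
    (hlim : Tendsto (fun m => stieltjesSum g h (dyadicPt a b m) (2 ^ m)) atTop (𝓝 L))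
    (hvar : ∀ m, variationSum h (dyadicPt a b m) (2 ^ m) ≤ V) :
    |L - stieltjesSum g h (dyadicPt a b k) (2 ^ k)| ≤ ε * V := by
  refine le_of_tendsto (hlim.sub_const _).abs ?_
  filter_upwards [eventually_ge_atTop k] with m hm
  obtain ⟨d, rfl⟩ := Nat.exists_eq_add_of_le hm
  exact (abs_stieltjesSum_dyadicPt_add_sub_le hab hmod d).trans
    (mul_le_mul_of_nonneg_left (hvar _) hε)

end DyadicStieltjes

lemma Monotone.biUnion_range_Ico {y : ℕ → ℝ} (hy : Monotone y) (n : ℕ) :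
    ⋃ j ∈ Finset.range n, Ico (y j) (y (j + 1)) = Ico (y 0) (y n) := by
  refine (iUnion₂_subset fun j hj => ?_).antisymm (Ico_subset_biUnion_Ico n y)
  exact Ico_subset_Ico (hy (Nat.zero_le j)) (hy (Finset.mem_range.1 hj))

lemma abs_setIntegral_Icc_sub_sum_le {μ : Measure ℝ} {g : ℝ → ℝ} {y : ℕ → ℝ} {n : ℕ} {a b ε : ℝ}
    (hy : Monotone y) (ha : y 0 = a) (hb : y n = b) (hab : a ≤ b)
    (hg : IntegrableOn g (Icc a b) μ) (hμ : μ (Icc a b) ≠ ⊤) (hgb : g b = 0) (hε : 0 ≤ ε)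
    (hmod : ∀ j < n, ∀ z ∈ Ico (y j) (y (j + 1)), |g z - g (y j)| ≤ ε) :
    |∫ x in Icc a b, g x ∂μ - ∑ j ∈ Finset.range n, g (y j) * (μ (Ico (y j) (y (j + 1)))).toReal|
      ≤ ε * (μ (Icc a b)).toReal := by
  have hcell_sub : ∀ j < n, Ico (y j) (y (j + 1)) ⊆ Icc a b := fun j hj =>
    (Ico_subset_Ico (ha ▸ hy j.zero_le) (hb ▸ hy hj)).trans Ico_subset_Icc_self
  have hcell_ne_top : ∀ j < n, μ (Ico (y j) (y (j + 1))) ≠ ⊤ := fun j hj =>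
    ne_top_of_le_ne_top hμ (measure_mono (hcell_sub j hj))
  have hdisj : (Finset.range n : Set ℕ).PairwiseDisjoint fun j => Ico (y j) (y (j + 1)) :=
    fun i _ j _ hij => hy.pairwise_disjoint_on_Ico_succ hij
  have hunion : ⋃ j ∈ Finset.range n, Ico (y j) (y (j + 1)) = Ico a b := by
    rw [hy.biUnion_range_Ico, ha, hb]
  -- the atom at `b` is not seen by the cells but contributes nothing since `g b = 0`
  have hsplit : ∫ x in Icc a b, g x ∂μ =
      ∑ j ∈ Finset.range n, ∫ x in Ico (y j) (y (j + 1)), g x ∂μ := by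
    rw [← Ico_union_right hab, setIntegral_union (by simp) (measurableSet_singleton b)
      (hg.mono_set Ico_subset_Icc_self) (hg.mono_set (by simp [hab])), integral_singleton, hgb,
      smul_zero, add_zero, ← hunion, integral_biUnion_finset _ (fun _ _ => measurableSet_Ico) hdisj
      fun j hj => hg.mono_set (hcell_sub j (Finset.mem_range.1 hj))]
  have hmass :
      ∑ j ∈ Finset.range n, (μ (Ico (y j) (y (j + 1)))).toReal ≤ (μ (Icc a b)).toReal := by
    rw [← ENNReal.toReal_sum fun j hj => hcell_ne_top j (Finset.mem_range.1 hj),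
      ← measure_biUnion_finset hdisj fun _ _ => measurableSet_Ico, hunion]
    exact ENNReal.toReal_mono hμ (measure_mono Ico_subset_Icc_self)
  rw [hsplit, ← Finset.sum_sub_distrib]
  calc _ ≤ ∑ j ∈ Finset.range n, ε * (μ (Ico (y j) (y (j + 1)))).toReal :=
        (Finset.abs_sum_le_sum_abs _ _).trans (Finset.sum_le_sum fun j hj => ?_)
    _ ≤ ε * (μ (Icc a b)).toReal := by
        rw [← Finset.mul_sum]; exact mul_le_mul_of_nonneg_left hmass hε
  replace hj := Finset.mem_range.1 hj
  have hcell :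
      ∫ x in Ico (y j) (y (j + 1)), g x ∂μ - g (y j) * (μ (Ico (y j) (y (j + 1)))).toReal
        = ∫ x in Ico (y j) (y (j + 1)), (g x - g (y j)) ∂μ := by
    rw [integral_sub (hg.mono_set (hcell_sub j hj)) (integrableOn_const (hcell_ne_top j hj)),
      setIntegral_const, smul_eq_mul, measureReal_def, mul_comm]
  rw [hcell, ← Real.norm_eq_abs]
  exact norm_setIntegral_le_of_norm_le_const (hcell_ne_top j hj).lt_top fun z hz =>
    hmod j hj z hz

section DyadicMeasure

variable {a b : ℝ} {g : ℝ → ℝ}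

lemma tendsto_sum_measure_Ico_dyadicPt (μ : Measure ℝ) [IsFiniteMeasure μ] (hab : a ≤ b)
    (hg : UniformContinuous g) (hgb : g b = 0) :
    Tendsto (fun m => ∑ j ∈ Finset.range (2 ^ m),
        g (dyadicPt a b m j) * (μ (Ico (dyadicPt a b m j) (dyadicPt a b m (j + 1)))).toReal)
      atTop (𝓝 (∫ x in Icc a b, g x ∂μ)) := by
  set M := (μ (Icc a b)).toReal
  refine Metric.tendsto_nhds.2 fun ε hε => ?_
  have hε' : 0 < ε / (M + 1) := by positivity
  filter_upwards [eventually_abs_sub_le_of_uniformContinuous hg a b hε'] with m hm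
  have hmod : ∀ j < 2 ^ m, ∀ z ∈ Ico (dyadicPt a b m j) (dyadicPt a b m (j + 1)),
      |g z - g (dyadicPt a b m j)| ≤ ε / (M + 1) := fun j _ z hz => hm _ _ <| by
    rw [abs_of_nonneg (sub_nonneg.2 hz.1), ← dyadicPt_succ_sub m j]
    linarith [hz.2]
  rw [dist_comm, Real.dist_eq]
  calc _ ≤ ε / (M + 1) * M :=
        abs_setIntegral_Icc_sub_sum_le (dyadicPt_monotone hab m) (dyadicPt_zero m)
          (dyadicPt_two_pow m) hab hg.continuous.integrableOn_Icc (measure_ne_top _ _) hgb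
          hε'.le hmod
    _ < ε := by
        rw [div_mul_eq_mul_div, div_lt_iff₀ (by positivity)]
        nlinarith

lemma tendsto_stieltjesSum_dyadicPt (μp μm : Measure ℝ) [IsFiniteMeasure μp]
    [IsFiniteMeasure μm] (hab : a ≤ b) (hg : UniformContinuous g) (hgb : g b = 0) {h : ℝ → ℝ}
    (hμ : ∀ x₁ x₂ : ℝ, a ≤ x₁ → x₁ ≤ x₂ → x₂ ≤ b →
      (μp (Ico x₁ x₂)).toReal - (μm (Ico x₁ x₂)).toReal = h x₂ - h x₁) :
    Tendsto (fun m => stieltjesSum g h (dyadicPt a b m) (2 ^ m)) atTop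
      (𝓝 ((∫ x in Icc a b, g x ∂μp) - ∫ x in Icc a b, g x ∂μm)) := by
  refine ((tendsto_sum_measure_Ico_dyadicPt μp hab hg hgb).sub
    (tendsto_sum_measure_Ico_dyadicPt μm hab hg hgb)).congr fun m => ?_
  rw [← Finset.sum_sub_distrib, stieltjesSum]
  refine Finset.sum_congr rfl fun j hj => ?_
  have hj := Finset.mem_range.1 hj
  rw [← mul_sub, hμ _ _ (dyadicPt_mem_Icc hab hj.le).1 (dyadicPt_monotone hab m j.le_succ)
    (dyadicPt_mem_Icc hab hj).2]

end DyadicMeasure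

lemma tendsto_of_forall_approx {ι α : Type*} [PseudoMetricSpace α] {l : Filter ι} {x : ι → α}
    {L : α} (h : ∀ ε > 0, ∃ (A : ι → α) (A₀ : α), Tendsto A l (𝓝 A₀) ∧
      (∀ᶠ i in l, dist (x i) (A i) ≤ ε) ∧ dist L A₀ ≤ ε) :
    Tendsto x l (𝓝 L) := by
  refine Metric.tendsto_nhds.2 fun ε hε => ?_
  obtain ⟨A, A₀, hA, hxA, hLA⟩ := h (ε / 4) (by positivity)
  filter_upwards [hxA, Metric.tendsto_nhds.1 hA (ε / 4) (by positivity)] with i hxi hAi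
  calc dist (x i) L ≤ dist (x i) (A i) + dist (A i) A₀ + dist A₀ L := dist_triangle4 _ _ _ _
    _ < ε := by rw [dist_comm A₀]; linarith

theorem weak_convergence_stieltjes_general (f : ℝ → ℝ) (fs : ℕ → ℝ → ℝ) (g : ℝ → ℝ)
    (a b : ℝ) (hab : a < b) (C : ℝ)
    -- f is left continuous of locally bounded variation
    (hfbv : var1 f a b ≠ ⊤)
    -- fₙ are left continuous with uniformly bounded variations, converging pointwise to f
    (hfsbv : ∀ n, var1 (fs n) a b ≤ ENNReal.ofReal C)
    (hconv : ∀ x ∈ Set.Icc a b, Tendsto (fun n => fs n x) atTop (𝓝 (f x)))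
    -- g is continuous with compact support in (a,b)
    (hg : Continuous g) (hgsupp : HasCompactSupport g) (hgint : tsupport g ⊆ Set.Ioo a b)
    -- the signed Lebesgue–Stieltjes measures of fₙ and of f
    (μp μm : ℕ → Measure ℝ) (νp νm : Measure ℝ)
    [∀ n, IsFiniteMeasure (μp n)] [∀ n, IsFiniteMeasure (μm n)]
    [IsFiniteMeasure νp] [IsFiniteMeasure νm]
    (hμ : ∀ n, ∀ x₁ x₂ : ℝ, a ≤ x₁ → x₁ ≤ x₂ → x₂ ≤ b →
      ((μp n) (Set.Ico x₁ x₂)).toReal - ((μm n) (Set.Ico x₁ x₂)).toReal = fs n x₂ - fs n x₁)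
    (hν : ∀ x₁ x₂ : ℝ, a ≤ x₁ → x₁ ≤ x₂ → x₂ ≤ b →
      (νp (Set.Ico x₁ x₂)).toReal - (νm (Set.Ico x₁ x₂)).toReal = f x₂ - f x₁) :
    Tendsto (fun n => (∫ x in Set.Icc a b, g x ∂(μp n)) - ∫ x in Set.Icc a b, g x ∂(μm n))
      atTop (𝓝 ((∫ x in Set.Icc a b, g x ∂νp) - ∫ x in Set.Icc a b, g x ∂νm)) := by
  have hgb : g b = 0 := image_eq_zero_of_notMem_tsupport fun hb => (hgint hb).2.false
  have hgu : UniformContinuous g := hgsupp.uniformContinuous_of_continuous hg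
  set V := (ENNReal.ofReal C).toReal
  set Vf := (var1 f a b).toReal
  have hV : 0 ≤ V := ENNReal.toReal_nonneg
  have hVf : 0 ≤ Vf := ENNReal.toReal_nonneg
  refine tendsto_of_forall_approx fun ε hε => ?_
  set ε' := ε / (V + Vf + 1)
  have hε' : 0 < ε' := by positivity
  have hε'_mul : ∀ W ≤ V + Vf + 1, ε' * W ≤ ε := fun W hW => by
    rw [div_mul_eq_mul_div, div_le_iff₀ (by positivity)]
    exact mul_le_mul_of_nonneg_left hW hε.le
  obtain ⟨k, hk⟩ := (eventually_abs_sub_le_of_uniformContinuous hgu a b hε').exists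
  refine ⟨fun n => stieltjesSum g (fs n) (dyadicPt a b k) (2 ^ k),
    stieltjesSum g f (dyadicPt a b k) (2 ^ k),
    tendsto_stieltjesSum fun j hj => hconv _ (dyadicPt_mem_Icc hab.le hj),
    Eventually.of_forall fun n => ?_, ?_⟩
  · rw [Real.dist_eq]
    exact (abs_sub_stieltjesSum_dyadicPt_le hab.le hε'.le hk
      (tendsto_stieltjesSum_dyadicPt _ _ hab.le hgu hgb (hμ n))
      (variationSum_dyadicPt_le_toReal hab (hfsbv n) ENNReal.ofReal_ne_top)).trans
        (hε'_mul V (by linarith))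
  · rw [Real.dist_eq]
    exact (abs_sub_stieltjesSum_dyadicPt_le hab.le hε'.le hk
      (tendsto_stieltjesSum_dyadicPt _ _ hab.le hgu hgb hν)
      (variationSum_dyadicPt_le_toReal hab le_rfl hfbv)).trans (hε'_mul Vf (by linarith))

/-- Weak convergence of Lebesgue–Stieltjes signed measures: if `f_n → f` pointwise on `[a,b]`
with uniformly bounded total variations, then `∫ g dμ_{f_n} → ∫ g dμ_f` for every continuous `g`
with compact support in `(a,b)`. -/
theorem weak_convergence_stieltjes (f : ℝ → ℝ) (fs : ℕ → ℝ → ℝ) (g : ℝ → ℝ)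
    (a b : ℝ) (hab : a < b) (C : ℝ)
    -- f is left continuous of locally bounded variation
    (hflc : ∀ x : ℝ, ∀ u : ℕ → ℝ, Monotone u → (∀ k, u k ≤ x) →
      Tendsto u atTop (𝓝 x) → Tendsto (fun k => f (u k)) atTop (𝓝 (f x)))
    (hfbv : var1 f a b ≠ ⊤)
    -- fₙ are left continuous with uniformly bounded variations, converging pointwise to f
    (hfslc : ∀ n : ℕ, ∀ x : ℝ, ∀ u : ℕ → ℝ, Monotone u → (∀ k, u k ≤ x) →
      Tendsto u atTop (𝓝 x) → Tendsto (fun k => fs n (u k)) atTop (𝓝 (fs n x)))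
    (hfsbv : ∀ n, var1 (fs n) a b ≤ ENNReal.ofReal C)
    (hconv : ∀ x ∈ Set.Icc a b, Tendsto (fun n => fs n x) atTop (𝓝 (f x)))
    -- g is continuous with compact support in (a,b)
    (hg : Continuous g) (hgsupp : HasCompactSupport g) (hgint : tsupport g ⊆ Set.Ioo a b)
    -- the signed Lebesgue–Stieltjes measures of fₙ and of f
    (μp μm : ℕ → Measure ℝ) (νp νm : Measure ℝ)
    [∀ n, IsFiniteMeasure (μp n)] [∀ n, IsFiniteMeasure (μm n)]
    [IsFiniteMeasure νp] [IsFiniteMeasure νm]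
    (hμ : ∀ n, ∀ x₁ x₂ : ℝ, a ≤ x₁ → x₁ ≤ x₂ → x₂ ≤ b →
      ((μp n) (Set.Ico x₁ x₂)).toReal - ((μm n) (Set.Ico x₁ x₂)).toReal = fs n x₂ - fs n x₁)
    (hν : ∀ x₁ x₂ : ℝ, a ≤ x₁ → x₁ ≤ x₂ → x₂ ≤ b →
      (νp (Set.Ico x₁ x₂)).toReal - (νm (Set.Ico x₁ x₂)).toReal = f x₂ - f x₁) :
    Tendsto (fun n => (∫ x in Set.Icc a b, g x ∂(μp n)) - ∫ x in Set.Icc a b, g x ∂(μm n))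
      atTop (𝓝 ((∫ x in Set.Icc a b, g x ∂νp) - ∫ x in Set.Icc a b, g x ∂νm)) :=
  weak_convergence_stieltjes_general f fs g a b hab C hfbv hfsbv hconv hg hgsupp hgint μp μm νp νm
    hμ hν
end
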